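/- arXiv:math/0512314 — 7 statements merged into one kernel-verified Lean document; each statement's English description precedes it below -/
import Mathlib

section
/- Let α > 1 be a real algebraic number and let ξ > 0 be a real number. If the set of limit points of the sequence of fractional parts {ξα^n}, n = 1, 2, 3, …, is finite, then α is a PV-number and ξ belongs to ℚ(α). -/
/-!
Write `ξαⁿ = aₙ + cₙ + eₙ` with `aₙ ∈ ℤ`, `cₙ` a limit point of `{ξαⁿ}` nearest to it and
`eₙ → 0`. Let `P` be the minimal polynomial of `α`, acting on sequences through the shift. Then
`P(S) e = -P(S) a - P(S) c` tends to `0` and (after clearing denominators) lies in `ℤ` plus a finite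
set, so it vanishes eventually, and `y = a + c` satisfies the recurrence `P`. As `c` takes finitely
many values, a window of `deg P` consecutive values of `c` recurs after some shift `h`, so
`Yₙ = yₙ₊ₕ - yₙ` is a solution that is integral on a window. Hence `Yₙ = Tr(θ αⁿ)` for some
`θ ∈ ℚ(α)`, i.e. `Yₙ = ∑_σ σ(θ) σ(α)ⁿ`, while `Yₙ - ξ(αʰ - 1)αⁿ = eₙ - eₙ₊ₕ → 0`. Exponential
sequences with distinct ratios of modulus `≥ 1` are independent modulo null sequences, which forces
`θ = ξ(αʰ - 1)` and `|σ(α)| < 1` for all other embeddings `σ`. Finally the denominators of `Yₙ` are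
bounded, so the `θαⁿ` span a finitely generated `ℤ`-module (inside a multiple of the trace dual
of `1, α, …, α^(d-1)`) stable under `α`, and `α` is an algebraic integer.
-/

open Polynomial Filter

/-- A Pisot–Vijayaraghavan (PV) number: a real algebraic integer `α > 1` all of whose
conjugates other than `α` itself have absolute value strictly less than `1`. -/
def IsPVNumber (α : ℝ) : Prop :=
  1 < α ∧ IsIntegral ℤ α ∧
    ∀ z : ℂ, aeval z (minpoly ℚ α) = 0 → z ≠ (α : ℂ) → ‖z‖ < 1

open Topology Finset
open scoped Pointwise

theorem exists_tendsto_dist_mapClusterPt {X ι : Type*} [PseudoMetricSpace X] {K : Set X}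
    (hK : IsCompact K) {l : Filter ι} [l.NeBot] {f : ι → X} (hf : ∀ᶠ i in l, f i ∈ K) :
    ∃ c : ι → X, (∀ i, MapClusterPt (c i) l f) ∧ Tendsto (fun i => dist (f i) (c i)) l (𝓝 0) := by
  set L := K ∩ {x | MapClusterPt x l f}
  have hL : IsCompact L := hK.inter_right isClosed_setOfPred_clusterPt
  obtain ⟨x, hxK, hx⟩ := hK.exists_mapClusterPt_of_frequently hf.frequently
  choose c hcL hc using fun i => hL.exists_infDist_eq_dist ⟨x, hxK, hx⟩ (f i)
  refine ⟨c, fun i => (hcL i).2, ?_⟩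
  simp only [← hc]
  exact ((Metric.continuous_infDist_pt L).tendsto_nhdsSet_nhds
    fun y hy => Metric.infDist_zero_of_mem hy).comp
    (hK.tendsto_nhdsSet_of_mapClusterPt hf fun y hyK hy => ⟨hyK, hy⟩)

theorem Filter.Tendsto.eventually_eq_of_finite {X ι : Type*} [TopologicalSpace X] [T1Space X]
    {l : Filter ι} {f : ι → X} {a : X} {s : Set X} (h : Tendsto f l (𝓝 a)) (hs : s.Finite)
    (hf : ∀ᶠ i in l, f i ∈ s) : ∀ᶠ i in l, f i = a := by
  have : (s \ {a})ᶜ ∈ 𝓝 a := (hs.sdiff).isClosed.compl_mem_nhds fun h => h.2 rfl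
  filter_upwards [hf, h this] with i hi hi'
  by_contra hne
  exact hi' ⟨hi, hne⟩

theorem eventually_eq_zero_of_tendsto_zero_of_add_int_mem {x : ℕ → ℝ} {F : Set ℝ}
    (hF : F.Finite) (hx : Tendsto x atTop (𝓝 0)) (hmem : ∀ n, ∃ z : ℤ, x n + z ∈ F) :
    ∀ᶠ n in atTop, x n = 0 := by
  have hcircle : ∀ᶠ n in atTop, (x n : AddCircle (1 : ℝ)) = 0 := by
    refine (((AddCircle.continuous_mk' 1).tendsto 0).comp hx).eventually_eq_of_finite
      (hF.image (↑)) (Eventually.of_forall fun n => ?_)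
    obtain ⟨z, hz⟩ := hmem n
    exact ⟨_, hz, by simp⟩
  filter_upwards [hcircle, hx (Ioo_mem_nhds (by norm_num : (-1 : ℝ) < 0) one_pos)]
    with n hn hn'
  obtain ⟨z, hz⟩ := (AddCircle.coe_eq_zero_iff 1).1 hn
  rw [zsmul_one] at hz
  rw [Set.mem_preimage, ← hz, Set.mem_Ioo] at hn'
  have : z = 0 := Int.abs_lt_one_iff.1 (by exact_mod_cast abs_lt.2 hn')
  rw [← hz, this, Int.cast_zero]

theorem exists_shift_eq_on_window {X : Type*} {s : Set X} (hs : s.Finite) {f : ℕ → X}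
    (hf : ∀ n, f n ∈ s) (N d : ℕ) : ∃ n ≥ N, ∃ h > 0, ∀ j < d, f (n + h + j) = f (n + j) := by
  obtain ⟨x, hx, y, -, hxy, heq⟩ := (Set.Ici_infinite N).exists_lt_map_eq_of_mapsTo
    (f := fun n (j : Fin d) => f (n + j)) (t := Set.univ.pi fun _ => s)
    (fun n _ j _ => hf _) (Set.Finite.pi fun _ => hs)
  refine ⟨x, hx, y - x, Nat.sub_pos_of_lt hxy, fun j hj => ?_⟩
  rw [Nat.add_sub_cancel' hxy.le]
  exact (congrFun heq ⟨j, hj⟩).symm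

namespace Polynomial

variable {R M : Type*} [CommSemiring R] [AddCommMonoid M] [Module R M]

/-- The polynomial `p` evaluated at the shift operator `s ↦ (n ↦ s (n + 1))`. -/
def evalShift (p : R[X]) : (ℕ → M) →ₗ[R] (ℕ → M) where
  toFun s n := ∑ j ∈ range (p.natDegree + 1), p.coeff j • s (n + j)
  map_add' s t := by ext n; simp [Finset.sum_add_distrib]
  map_smul' r s := by ext n; simp [Finset.smul_sum, smul_comm r]

theorem evalShift_apply (p : R[X]) (s : ℕ → M) (n : ℕ) :
    p.evalShift s n = ∑ j ∈ range (p.natDegree + 1), p.coeff j • s (n + j) := rfl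

theorem evalShift_comp_add (p : R[X]) (s : ℕ → M) (h n : ℕ) :
    p.evalShift (fun m => s (m + h)) n = p.evalShift s (n + h) := by
  simp only [evalShift_apply, add_right_comm]

theorem evalShift_comp_linearMap {N : Type*} [AddCommMonoid N] [Module R N] (p : R[X])
    (f : M →ₗ[R] N) (s : ℕ → M) (n : ℕ) : p.evalShift (f ∘ s) n = f (p.evalShift s n) := by
  simp [evalShift_apply]

theorem evalShift_mul_pow {A : Type*} [CommSemiring A] [Algebra R A] (p : R[X]) (x y : A)
    (n : ℕ) : p.evalShift (fun m => y * x ^ m) n = y * x ^ n * aeval x p := by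
  simp only [evalShift_apply, aeval_eq_sum_range, Finset.mul_sum, pow_add, mul_smul_comm,
    mul_assoc]

theorem finite_range_evalShift (p : R[X]) {s : ℕ → M} (hs : (Set.range s).Finite) :
    (Set.range (p.evalShift s)).Finite := by
  have := hs.to_subtype
  refine (Set.finite_range fun w : Fin (p.natDegree + 1) → Set.range s =>
    ∑ j : Fin (p.natDegree + 1), p.coeff j • (w j : M)).subset ?_
  rintro _ ⟨n, rfl⟩
  exact ⟨fun j => ⟨s (n + j), n + j, rfl⟩,
    (Fin.sum_univ_eq_sum_range (fun j => p.coeff j • s (n + j)) _)⟩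

theorem tendsto_evalShift [TopologicalSpace M] [ContinuousAdd M] [ContinuousConstSMul R M]
    (p : R[X]) {s : ℕ → M} (hs : Tendsto s atTop (𝓝 0)) :
    Tendsto (p.evalShift s) atTop (𝓝 0) := by
  show Tendsto (fun n => ∑ j ∈ range (p.natDegree + 1), p.coeff j • s (n + j)) atTop (𝓝 0)
  have := tendsto_finsetSum (range (p.natDegree + 1)) fun j _ =>
    (hs.comp (tendsto_add_atTop_nat j)).const_smul (p.coeff j)
  simpa using this

theorem Monic.eq_zero_of_evalShift_eq_zero {p : R[X]} (hp : p.Monic) {s : ℕ → M} {n₀ : ℕ}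
    (hrec : ∀ n ≥ n₀, p.evalShift s n = 0) (hinit : ∀ j < p.natDegree, s (n₀ + j) = 0) :
    ∀ n ≥ n₀, s n = 0 := by
  suffices ∀ k, s (n₀ + k) = 0 from fun n hn => by
    simpa [Nat.add_sub_cancel' hn] using this (n - n₀)
  intro k
  induction k using Nat.strong_induction_on with
  | _ k ih =>
    rcases lt_or_ge k p.natDegree with hk | hk
    · exact hinit k hk
    have h := hrec (n₀ + (k - p.natDegree)) (Nat.le_add_right _ _)
    rw [evalShift_apply, Finset.sum_range_succ, hp.coeff_natDegree, one_smul,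
      Finset.sum_eq_zero fun j hj => ?_, zero_add] at h
    · rwa [add_assoc, Nat.sub_add_cancel hk] at h
    · rw [add_assoc, ih _ (by simp at hj; omega), smul_zero]

theorem eventually_evalShift_eq_zero_of_int_add_add {P : ℚ[X]} {a : ℕ → ℤ} {c e : ℕ → ℝ}
    (hc : (Set.range c).Finite) (he : Tendsto e atTop (𝓝 0))
    (h : ∀ n, P.evalShift (fun m => (a m : ℝ) + c m + e m) n = 0) :
    ∀ᶠ n in atTop, P.evalShift e n = 0 := by
  -- `b` clears the denominators of `P`, so `b • P(S)` maps integer sequences to integers.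
  obtain ⟨⟨b, hb⟩, hbP⟩ := IsLocalization.exist_integer_multiples (nonZeroDivisors ℤ)
    (range (P.natDegree + 1)) P.coeff
  have hb0 : (b : ℝ) ≠ 0 := Int.cast_ne_zero.2 (nonZeroDivisors.ne_zero hb)
  have hint : ∀ n, (b : ℝ) * P.evalShift (fun m => (a m : ℝ)) n ∈ (⊥ : Subring ℝ) := by
    intro n
    rw [evalShift_apply, Finset.mul_sum]
    refine Subring.sum_mem _ fun j hj => ?_
    obtain ⟨z, hz⟩ := hbP j hj
    have hz' : (z : ℝ) = b * P.coeff j := by exact_mod_cast congrArg ((↑) : ℚ → ℝ) hz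
    rw [Rat.smul_def, ← mul_assoc, ← hz']
    exact Subring.mul_mem _ (Subring.mem_bot.2 ⟨z, rfl⟩) (Subring.mem_bot.2 ⟨a (n + j), rfl⟩)
  have hx : Tendsto (fun n => (b : ℝ) * P.evalShift e n) atTop (𝓝 0) := by
    simpa using (P.tendsto_evalShift he).const_mul (b : ℝ)
  refine (eventually_eq_zero_of_tendsto_zero_of_add_int_mem
    ((P.finite_range_evalShift hc).image fun y => -(b : ℝ) * y) hx fun n => ?_).mono
    fun n hn => (mul_eq_zero.1 hn).resolve_left hb0
  obtain ⟨z, hz⟩ := Subring.mem_bot.1 (hint n)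
  refine ⟨z, _, ⟨n, rfl⟩, ?_⟩
  have hsplit := h n
  rw [show (fun m => (a m : ℝ) + c m + e m) = (fun m => (a m : ℝ)) + c + e from rfl,
    map_add, map_add] at hsplit
  simp only [Pi.add_apply] at hsplit
  linear_combination (-(b : ℝ)) * hsplit - hz

end Polynomial

theorem eq_zero_of_tendsto_sum_mul_pow {𝕜 ι : Type*} [NormedField 𝕜] [Fintype ι]
    {r : ι → 𝕜} (hr : Function.Injective r) {γ : ι → 𝕜}
    (h : Tendsto (fun n => ∑ i, γ i * r i ^ n) atTop (𝓝 0)) {i : ι} (hi : 1 ≤ ‖r i‖) :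
    γ i = 0 := by
  classical
  set Q := ∏ j ∈ univ.erase i, (X - C (r j))
  have hQ : ∀ j ≠ i, Q.eval (r j) = 0 := fun j hj => by
    rw [eval_prod]
    exact Finset.prod_eq_zero (mem_erase.2 ⟨hj, mem_univ j⟩) (by simp)
  have hQi : Q.eval (r i) ≠ 0 := by
    rw [eval_prod, prod_ne_zero_iff]
    intro j hj
    simpa [sub_eq_zero] using fun h => (mem_erase.1 hj).1 (hr h).symm
  have hkill : Q.evalShift (fun n => ∑ j, γ j * r j ^ n) =
      fun n => γ i * Q.eval (r i) * r i ^ n := by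
    ext n
    have : (fun n => ∑ j, γ j * r j ^ n) = ∑ j, fun n => γ j * r j ^ n := by ext; simp
    rw [this, map_sum, Finset.sum_apply, Finset.sum_eq_single i (fun j _ hj => by
      rw [evalShift_mul_pow, coe_aeval_eq_eval, hQ j hj, mul_zero]) (by simp),
      evalShift_mul_pow, coe_aeval_eq_eval]
    ring
  have hlim := Q.tendsto_evalShift h
  rw [hkill] at hlim
  have : ‖γ i * Q.eval (r i)‖ ≤ 0 := by
    refine le_of_tendsto_of_tendsto' tendsto_const_nhds (by simpa using hlim.norm) fun n => ?_
    rw [← norm_mul]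
    exact le_mul_of_one_le_right (norm_nonneg _) (one_le_pow₀ hi)
  simpa [hQi] using norm_le_zero_iff.1 this

theorem exists_eq_int_add_mapClusterPt_fract_add (u : ℕ → ℝ) :
    ∃ (a : ℕ → ℤ) (c e : ℕ → ℝ), (∀ n, MapClusterPt (c n) atTop (fun n => Int.fract (u n))) ∧
      Tendsto e atTop (𝓝 0) ∧ ∀ n, u n = a n + c n + e n := by
  obtain ⟨c, hc, hlim⟩ := exists_tendsto_dist_mapClusterPt (l := atTop) isCompact_Icc
    (Eventually.of_forall fun n => ⟨Int.fract_nonneg (u n), (Int.fract_lt_one (u n)).le⟩)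
  refine ⟨fun n => ⌊u n⌋, c, fun n => Int.fract (u n) - c n, hc, ?_, fun n => ?_⟩
  · exact tendsto_iff_dist_tendsto_zero.2 (by simpa [Real.dist_eq] using hlim)
  · linarith [Int.floor_add_fract (u n)]

theorem exists_recurrent_int_mod_finite_approx {α ξ : ℝ} {P : ℚ[X]} (hP : aeval α P = 0)
    {a : ℕ → ℤ} {c e : ℕ → ℝ} {L : Set ℝ} (hL : L.Finite) (hcL : ∀ n, c n ∈ L)
    (he : Tendsto e atTop (𝓝 0)) (hu : ∀ n, ξ * α ^ n = a n + c n + e n) :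
    ∃ h > 0, ∃ n₀ : ℕ, ∃ Y : ℕ → ℝ, (∀ n ≥ n₀, P.evalShift Y n = 0) ∧
      (∀ j < P.natDegree, ∃ z : ℤ, Y (n₀ + j) = z) ∧ (∀ n, ∃ z : ℤ, Y n - z ∈ L - L) ∧
      Tendsto (fun n => Y n - ξ * (α ^ h - 1) * α ^ n) atTop (𝓝 0) := by
  set y : ℕ → ℝ := fun n => a n + c n
  have hrec : ∀ᶠ n in atTop, P.evalShift y n = 0 := by
    have hu' : ∀ n, P.evalShift (fun m => (a m : ℝ) + c m + e m) n = 0 := fun n => by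
      simp only [← hu, evalShift_mul_pow, hP, mul_zero]
    filter_upwards [eventually_evalShift_eq_zero_of_int_add_add
      (hL.subset (Set.range_subset_iff.2 hcL)) he hu'] with n hn
    have : y = (fun m => (a m : ℝ) + c m + e m) - e := by ext; simp [y]
    rw [this, map_sub, Pi.sub_apply, hu' n, hn, sub_zero]
  obtain ⟨N, hN⟩ := eventually_atTop.1 hrec
  obtain ⟨n₀, hn₀, h, hh, hwin⟩ := exists_shift_eq_on_window hL hcL N P.natDegree
  refine ⟨h, hh, n₀, fun n => y (n + h) - y n, fun n hn => ?_, fun j hj => ?_, fun n => ?_, ?_⟩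
  · rw [show (fun n => y (n + h) - y n) = (fun n => y (n + h)) - y from rfl, map_sub,
      Pi.sub_apply, evalShift_comp_add, hN _ (by omega), hN _ (by omega), sub_zero]
  · refine ⟨a (n₀ + j + h) - a (n₀ + j), ?_⟩
    simp only [y, add_right_comm n₀ j h, hwin j hj]
    push_cast
    ring
  · exact ⟨a (n + h) - a n, c (n + h), hcL _, c n, hcL _, by simp only [y]; push_cast; ring⟩
  · have := he.sub (he.comp (tendsto_add_atTop_nat h))
    rw [sub_zero] at this
    refine this.congr fun n => ?_
    simp only [Function.comp_apply, y]
    linear_combination hu (n + h) - hu n - ξ * pow_add α n h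

namespace PowerBasis

variable {K : Type*} [Field K] [Algebra ℚ K] [FiniteDimensional ℚ K] (pb : PowerBasis ℚ K)

theorem exists_trace_mul_pow_eq {Y : ℕ → ℝ} {n₀ : ℕ} (hg : pb.gen ≠ 0)
    (hrec : ∀ n ≥ n₀, (minpoly ℚ pb.gen).evalShift Y n = 0)
    (hinit : ∀ j < (minpoly ℚ pb.gen).natDegree, ∃ q : ℚ, Y (n₀ + j) = q) :
    ∃ θ : K, ∀ n ≥ n₀, Y n = Algebra.trace ℚ K (θ * pb.gen ^ n) := by
  choose! v hv using hinit
  set ω := (Algebra.traceForm ℚ K).dualBasis (traceForm_nondegenerate ℚ K) pb.basis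
  set x := ω.equivFun.symm fun i => v i
  have hx : ∀ i : Fin pb.dim, Algebra.trace ℚ K (x * pb.gen ^ (i : ℕ)) = v i := fun i => by
    have := LinearMap.BilinForm.dualBasis_repr_apply (traceForm_nondegenerate ℚ K) pb.basis x i
    rwa [Algebra.traceForm_apply, pb.coe_basis, ← ω.equivFun_apply,
      ω.equivFun.apply_symm_apply, eq_comm] at this
  refine ⟨x * (pb.gen ^ n₀)⁻¹, fun n hn => sub_eq_zero.1 ?_⟩
  refine (minpoly.monic pb.isIntegral_gen).eq_zero_of_evalShift_eq_zero
    (s := Y - fun n => (Algebra.trace ℚ K (x * (pb.gen ^ n₀)⁻¹ * pb.gen ^ n) : ℝ))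
    (fun n hn => ?_) (fun j hj => ?_) n hn
  · have htr := (minpoly ℚ pb.gen).evalShift_comp_linearMap
      ((Algebra.linearMap ℚ ℝ).comp (Algebra.trace ℚ K))
      (fun n => x * (pb.gen ^ n₀)⁻¹ * pb.gen ^ n) n
    rw [evalShift_mul_pow, minpoly.aeval, mul_zero, map_zero] at htr
    rw [map_sub, Pi.sub_apply, hrec n hn, zero_sub, neg_eq_zero]
    exact htr
  · have := hx ⟨j, pb.natDegree_minpoly ▸ hj⟩
    simp only [Pi.sub_apply, hv j hj, pow_add, mul_assoc, inv_mul_cancel_left₀ (pow_ne_zero _ hg)]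
    rw [this, sub_self]

theorem eq_and_norm_lt_one_of_tendsto (τ : K →ₐ[ℚ] ℝ) {θ : K} {c : ℝ} (hc : c ≠ 0)
    (hτ : 1 ≤ |τ pb.gen|)
    (h : Tendsto (fun n => (Algebra.trace ℚ K (θ * pb.gen ^ n) : ℝ) - c * τ pb.gen ^ n)
      atTop (𝓝 0)) :
    τ θ = c ∧ ∀ z : ℂ, aeval z (minpoly ℚ pb.gen) = 0 → z ≠ τ pb.gen → ‖z‖ < 1 := by
  classical
  set σ₀ : K →ₐ[ℚ] ℂ := (Complex.ofRealAm.restrictScalars ℚ).comp τ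
  have hvanish : ∀ σ : K →ₐ[ℚ] ℂ, 1 ≤ ‖σ pb.gen‖ →
      σ θ - (if σ = σ₀ then (c : ℂ) else 0) = 0 := by
    intro σ hσ
    refine eq_zero_of_tendsto_sum_mul_pow (r := fun σ : K →ₐ[ℚ] ℂ => σ pb.gen)
      (γ := fun σ => σ θ - if σ = σ₀ then (c : ℂ) else 0)
      (fun σ σ' h => pb.algHom_ext h) ?_ hσ
    have hsum : ∀ n, ∑ σ : K →ₐ[ℚ] ℂ, (σ θ - if σ = σ₀ then (c : ℂ) else 0) * σ pb.gen ^ n =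
        (((Algebra.trace ℚ K (θ * pb.gen ^ n) : ℝ) - c * τ pb.gen ^ n : ℝ) : ℂ) := by
      intro n
      have := trace_eq_sum_embeddings ℂ (K := ℚ) (x := θ * pb.gen ^ n)
      simp only [map_mul, map_pow] at this
      simp only [sub_mul, ite_mul, zero_mul, Finset.sum_sub_distrib, Finset.sum_ite_eq',
        Finset.mem_univ, if_true, ← this]
      simp [σ₀]
    have := (Complex.continuous_ofReal.tendsto 0).comp h
    rw [Complex.ofReal_zero] at this
    exact this.congr fun n => (hsum n).symm
  have hθ : τ θ = c := by
    have := hvanish σ₀ (by simpa [σ₀] using hτ)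
    simpa [σ₀, sub_eq_zero] using this
  refine ⟨hθ, fun z hz hzne => ?_⟩
  by_contra! hz1
  have hσ : pb.lift z hz ≠ σ₀ := fun h => hzne (by rw [← pb.lift_gen z hz, h]; rfl)
  have := hvanish (pb.lift z hz) (by rwa [pb.lift_gen])
  rw [if_neg hσ, sub_zero, map_eq_zero] at this
  rw [this, map_zero] at hθ
  exact hc hθ.symm

theorem isIntegral_gen_of_trace_mul_pow_eq_int {θ : K} (hθ : θ ≠ 0) {n₀ : ℕ}
    (h : ∀ n ≥ n₀, ∃ z : ℤ, Algebra.trace ℚ K (θ * pb.gen ^ n) = z) : IsIntegral ℤ pb.gen := by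
  rcases eq_or_ne pb.gen 0 with hg | hg
  · rw [hg]
    exact isIntegral_zero
  set ω := (Algebra.traceForm ℚ K).dualBasis (traceForm_nondegenerate ℚ K) pb.basis
  set N := Submodule.span ℤ (Set.range fun n => θ * pb.gen ^ (n₀ + n))
  have hle : N ≤ Submodule.span ℤ (Set.range ω) := by
    rw [Submodule.span_le]
    rintro _ ⟨n, rfl⟩
    show θ * pb.gen ^ (n₀ + n) ∈ _
    rw [← ω.sum_repr (θ * pb.gen ^ (n₀ + n))]
    refine Submodule.sum_mem _ fun i _ => ?_
    obtain ⟨z, hz⟩ := h (n₀ + n + i) (by omega)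
    rw [LinearMap.BilinForm.dualBasis_repr_apply, Algebra.traceForm_apply, pb.coe_basis,
      mul_assoc, ← pow_add, hz, Int.cast_smul_eq_zsmul]
    exact Submodule.smul_mem _ z (Submodule.subset_span ⟨i, rfl⟩)
  refine isIntegral_of_smul_mem_submodule N (fun hN => ?_)
    ((Submodule.fg_span (Set.finite_range ω)).of_le hle) pb.gen fun x hx => ?_
  · have : θ * pb.gen ^ (n₀ + 0) ∈ N := Submodule.subset_span ⟨0, rfl⟩
    rw [hN, Submodule.mem_bot] at this
    exact mul_ne_zero hθ (pow_ne_zero _ hg) this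
  · have hN : N.map (LinearMap.mulLeft ℤ pb.gen) ≤ N := by
      rw [Submodule.map_span_le]
      rintro _ ⟨n, rfl⟩
      exact Submodule.subset_span ⟨n + 1, by simp only [LinearMap.mulLeft_apply]; ring⟩
    exact hN ⟨x, hx, rfl⟩

theorem isIntegral_gen_of_trace_mul_pow_sub_int_mem {θ : K} (hθ : θ ≠ 0) {D : Set ℚ}
    (hD : D.Finite) {n₀ : ℕ} (h : ∀ n ≥ n₀, ∃ z : ℤ, Algebra.trace ℚ K (θ * pb.gen ^ n) - z ∈ D) :
    IsIntegral ℤ pb.gen := by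
  obtain ⟨⟨b, hb⟩, hbD⟩ := IsLocalization.exist_integer_multiples (nonZeroDivisors ℤ)
    hD.toFinset id
  refine pb.isIntegral_gen_of_trace_mul_pow_eq_int (θ := (b : ℚ) • θ)
    (smul_ne_zero (Int.cast_ne_zero.2 (nonZeroDivisors.ne_zero hb)) hθ) (n₀ := n₀) fun n hn => ?_
  obtain ⟨z, hz⟩ := h n hn
  obtain ⟨w, hw⟩ := hbD _ (hD.mem_toFinset.2 hz)
  refine ⟨b * z + w, ?_⟩
  simp only [id, zsmul_eq_mul, algebraMap_int_eq, eq_intCast] at hw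
  rw [smul_mul_assoc, map_smul, smul_eq_mul]
  push_cast
  linear_combination -hw

theorem exists_eq_isIntegral_norm_lt_one_of_tendsto (τ : K →ₐ[ℚ] ℝ) (hτ : 1 ≤ |τ pb.gen|)
    {c : ℝ} (hc : c ≠ 0) {Y : ℕ → ℝ} {n₀ : ℕ} {D : Set ℝ} (hD : D.Finite)
    (hrec : ∀ n ≥ n₀, (minpoly ℚ pb.gen).evalShift Y n = 0)
    (hinit : ∀ j < (minpoly ℚ pb.gen).natDegree, ∃ z : ℤ, Y (n₀ + j) = z)
    (hfrac : ∀ n ≥ n₀, ∃ z : ℤ, Y n - z ∈ D)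
    (hlim : Tendsto (fun n => Y n - c * τ pb.gen ^ n) atTop (𝓝 0)) :
    ∃ θ : K, τ θ = c ∧ IsIntegral ℤ pb.gen ∧
      ∀ z : ℂ, aeval z (minpoly ℚ pb.gen) = 0 → z ≠ τ pb.gen → ‖z‖ < 1 := by
  have hg : pb.gen ≠ 0 := by
    rintro hg
    rw [hg, map_zero, abs_zero] at hτ
    exact absurd hτ zero_lt_one.not_ge
  obtain ⟨θ, hθ⟩ := pb.exists_trace_mul_pow_eq hg hrec fun j hj => by
    obtain ⟨z, hz⟩ := hinit j hj
    exact ⟨z, by rw [hz, Rat.cast_intCast]⟩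
  obtain ⟨hθc, hconj⟩ := pb.eq_and_norm_lt_one_of_tendsto τ (θ := θ) hc hτ
    (hlim.congr' ((eventually_ge_atTop n₀).mono fun n hn => by rw [hθ n hn]))
  have hθ0 : θ ≠ 0 := by
    rintro rfl
    exact hc (by simpa using hθc.symm)
  refine ⟨θ, hθc, pb.isIntegral_gen_of_trace_mul_pow_sub_int_mem hθ0
    (hD.preimage Rat.cast_injective.injOn) (n₀ := n₀) fun n hn => ?_, hconj⟩
  obtain ⟨z, hz⟩ := hfrac n hn
  exact ⟨z, by simpa [← hθ n hn] using hz⟩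

end PowerBasis

/-- If `α > 1` is a real algebraic number, `ξ > 0` is real, and the set of limit points of the
sequence of fractional parts `{ξ αⁿ}` is finite, then `α` is a PV-number and `ξ ∈ ℚ(α)`. -/
theorem pisot_of_finite_limit_points (α ξ : ℝ) (hα : 1 < α) (halg : IsAlgebraic ℚ α)
    (hξ : 0 < ξ)
    (hfin : {x : ℝ | MapClusterPt x atTop (fun n : ℕ => Int.fract (ξ * α ^ n))}.Finite) :
    IsPVNumber α ∧ ξ ∈ IntermediateField.adjoin ℚ ({α} : Set ℝ) := by
  have := IntermediateField.adjoin.finiteDimensional halg.isIntegral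
  set pb := IntermediateField.adjoin.powerBasis halg.isIntegral
  have hgen : (pb.gen : ℝ) = α := by simp [pb]
  have hmin : minpoly ℚ pb.gen = minpoly ℚ α := by
    rw [IntermediateField.adjoin.powerBasis_gen]
    exact IntermediateField.minpoly_gen ℚ α
  obtain ⟨a, c, e, hc, he, hu⟩ := exists_eq_int_add_mapClusterPt_fract_add fun n => ξ * α ^ n
  obtain ⟨h, hh, n₀, Y, hrec, hinit, hfrac, hlim⟩ := exists_recurrent_int_mod_finite_approx
    (P := minpoly ℚ pb.gen) (by rw [hmin]; exact minpoly.aeval ℚ α) hfin hc he hu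
  have hαh : α ^ h - 1 ≠ 0 := (sub_pos.2 (one_lt_pow₀ hα hh.ne')).ne'
  obtain ⟨θ, hθξ, hint, hconj⟩ := pb.exists_eq_isIntegral_norm_lt_one_of_tendsto
    (IntermediateField.val _) (by simp [hgen, abs_of_pos (zero_lt_one.trans hα), hα.le])
    (mul_ne_zero hξ.ne' hαh) (hfin.sub hfin) hrec hinit (fun n _ => hfrac n)
    (by simpa [hgen] using hlim)
  refine ⟨⟨hα, by simpa [hgen] using hint.algebraMap (B := ℝ), fun z hz hzα => ?_⟩, ?_⟩
  -- `pb` carries the `IntermediateField` algebra instance, which is only defeq to the synthesized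
  -- one in `hmin`, so `convert` rather than `rw`.
  · exact hconj z (by convert hz using 2; exact hmin) (by rwa [IntermediateField.coe_val, hgen])
  · have : ξ = ((θ / (pb.gen ^ h - 1) : IntermediateField.adjoin ℚ ({α} : Set ℝ)) : ℝ) := by
      push_cast
      rw [hgen, ← IntermediateField.coe_val, hθξ]
      field_simp [hαh]
    rw [this]
    exact SetLike.coe_mem _
end

section
/- Let α be a PV-number of degree d with conjugates α = α_1, α_2, …, α_d, and let ξ = (e_0 + e_1 α + ⋯ + e_{d−1} α^{d−1})/L with e_0, …, e_{d−1} ∈ ℤ and L ∈ ℕ, ξ > 0. Then every limit point of the sequence of fractional parts {ξα^n}, n = 1, 2, 3, …, belongs to the set {0, 1/L, 2/L, …, (L−1)/L, 1}. In particular, the set of limit points is finite. -/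
/-!
Write `L ξ = β ∈ ℤ[α]`. For every `n`, the trace of `β αⁿ` from `ℚ(α)` is an integer `mₙ`, and
it is the sum of `β αⁿ` and its conjugates `σ(β) σ(α)ⁿ`; these tend to `0` since `|σ(α)| < 1`.
Hence `L ξ αⁿ - mₙ → 0`, so along any subsequence where `{ξ αⁿ}` converges to `μ`, the numbers
`L {ξ αⁿ}` approach integers, and `L μ ∈ {0, …, L}`.
-/

open Polynomial Filter

open Topology IntermediateField

theorem exists_intCast_eq_trace_of_isIntegral {K : Type*} [Field K] [NumberField K] {x : K}
    (hx : IsIntegral ℤ x) : ∃ m : ℤ, (m : ℚ) = Algebra.trace ℚ K x := by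
  obtain ⟨m, hm⟩ := IsIntegrallyClosed.isIntegral_iff.mp (Algebra.isIntegral_trace (L := ℚ) hx)
  exact ⟨m, by simpa using hm⟩

theorem tendsto_embedding_sub_trace {K : Type*} [Field K] [NumberField K] (σ₀ : K →ₐ[ℚ] ℂ)
    {a : K} (ha : ∀ σ : K →ₐ[ℚ] ℂ, σ ≠ σ₀ → ‖σ a‖ < 1) (b : K) :
    Tendsto (fun n : ℕ => σ₀ (b * a ^ n) - algebraMap ℚ ℂ (Algebra.trace ℚ K (b * a ^ n)))
      atTop (𝓝 0) := by
  classical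
  have hsplit : ∀ n : ℕ, σ₀ (b * a ^ n) - algebraMap ℚ ℂ (Algebra.trace ℚ K (b * a ^ n)) =
      -∑ σ ∈ Finset.univ.erase σ₀, σ b * σ a ^ n := by
    intro n
    rw [trace_eq_sum_embeddings ℂ, ← Finset.add_sum_erase _ _ (Finset.mem_univ σ₀)]
    simp only [map_mul, map_pow]
    ring
  rw [tendsto_congr hsplit, ← neg_zero]
  refine Tendsto.neg ?_
  simpa only [mul_zero, Finset.sum_const_zero] using tendsto_finsetSum _ fun σ hσ =>
    (tendsto_pow_atTop_nhds_zero_of_norm_lt_one (ha σ (Finset.ne_of_mem_erase hσ))).const_mul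
      (σ b)

namespace IsPVNumber

variable {α : ℝ}

noncomputable def realEmbedding (α : ℝ) : ℚ⟮α⟯ →ₐ[ℚ] ℂ :=
  (Complex.ofRealAm.restrictScalars ℚ).comp (ℚ⟮α⟯).val

@[simp]
theorem realEmbedding_apply (x : ℚ⟮α⟯) : realEmbedding α x = ((x : ℝ) : ℂ) := rfl

theorem norm_embedding_gen_lt_one (hα : IsPVNumber α) (σ : ℚ⟮α⟯ →ₐ[ℚ] ℂ)
    (hσ : σ ≠ realEmbedding α) : ‖σ (AdjoinSimple.gen ℚ α)‖ < 1 := by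
  have hQ : IsIntegral ℚ α := hα.2.1.tower_top
  refine hα.2.2 _ ?_ fun h => hσ (PowerBasis.algHom_ext (adjoin.powerBasis hQ) ?_)
  · rw [aeval_algHom_apply]
    convert map_zero σ
    exact aeval_gen_minpoly ℚ α
  · rw [adjoin.powerBasis_gen]
    exact h

theorem exists_tendsto_mul_pow_sub_intCast (hα : IsPVNumber α) {β : ℝ} (hβ : β ∈ ℚ⟮α⟯)
    (hβZ : IsIntegral ℤ β) :
    ∃ m : ℕ → ℤ, Tendsto (fun n : ℕ => β * α ^ n - m n) atTop (𝓝 0) := by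
  have : FiniteDimensional ℚ ℚ⟮α⟯ := adjoin.finiteDimensional hα.2.1.tower_top
  have : NumberField ℚ⟮α⟯ := ⟨⟩
  have hbZ : IsIntegral ℤ (⟨β, hβ⟩ : ℚ⟮α⟯) :=
    (isIntegral_algebraMap_iff (algebraMap ℚ⟮α⟯ ℝ).injective).mp hβZ
  have haZ : IsIntegral ℤ (AdjoinSimple.gen ℚ α) :=
    (isIntegral_algebraMap_iff (algebraMap ℚ⟮α⟯ ℝ).injective).mp hα.2.1
  choose m hm using fun n : ℕ => exists_intCast_eq_trace_of_isIntegral (hbZ.mul (haZ.pow n))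
  refine ⟨m, ?_⟩
  have h := (Complex.continuous_re.tendsto 0).comp
    (tendsto_embedding_sub_trace _ hα.norm_embedding_gen_lt_one ⟨β, hβ⟩)
  rw [Complex.zero_re] at h
  refine h.congr fun n => ?_
  simp [← hm n, -Complex.ofReal_pow]

end IsPVNumber

theorem exists_intCast_eq_of_tendsto {ι : Type*} {l : Filter ι} [l.NeBot] {k : ι → ℤ} {x : ℝ}
    (h : Tendsto (fun i => (k i : ℝ)) l (𝓝 x)) : ∃ j : ℤ, (j : ℝ) = x :=
  Int.isClosedEmbedding_coe_real.isClosed_range.mem_of_tendsto h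
    (Eventually.of_forall fun i => ⟨k i, rfl⟩)

theorem exists_eq_natCast_div_of_mapClusterPt_fract {x : ℕ → ℝ} {m : ℕ → ℤ} {L : ℕ} (hL : 0 < L)
    (hx : Tendsto (fun n => L * x n - m n) atTop (𝓝 0)) {μ : ℝ}
    (hμ : MapClusterPt μ atTop fun n => Int.fract (x n)) :
    ∃ j : ℕ, j ≤ L ∧ μ = j / L := by
  obtain ⟨ψ, hψ, hμψ⟩ := hμ.tendsto_subseq
  have hμ01 : μ ∈ Set.Icc (0 : ℝ) 1 := isClosed_Icc.mem_of_tendsto hμψ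
    (Eventually.of_forall fun n => ⟨Int.fract_nonneg _, (Int.fract_lt_one _).le⟩)
  have hk : Tendsto (fun n => ((m (ψ n) - L * ⌊x (ψ n)⌋ : ℤ) : ℝ)) atTop (𝓝 (L * μ)) := by
    have := (hμψ.const_mul (L : ℝ)).sub (hx.comp hψ.tendsto_atTop)
    rw [sub_zero] at this
    refine this.congr fun n => ?_
    simp only [Function.comp_apply, Int.fract]
    push_cast
    ring
  obtain ⟨j, hj⟩ := exists_intCast_eq_of_tendsto hk
  have hL' : (0 : ℝ) < L := Nat.cast_pos.mpr hL
  have hj0 : 0 ≤ j := by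
    have : (0 : ℝ) ≤ j := hj ▸ mul_nonneg hL'.le hμ01.1
    exact_mod_cast this
  lift j to ℕ using hj0
  rw [Int.cast_natCast] at hj
  have hjL : (j : ℝ) ≤ L := hj ▸ mul_le_of_le_one_right hL'.le hμ01.2
  refine ⟨j, by exact_mod_cast hjL, ?_⟩
  rw [eq_div_iff hL'.ne', mul_comm]
  exact hj.symm

theorem limit_points_subset_of_pisot_general (α : ℝ) (hα : IsPVNumber α) (d : ℕ)
    (e : Fin d → ℤ) (L : ℕ) (hL : 0 < L) (ξ : ℝ)
    (hξdef : ξ = (∑ i : Fin d, (e i : ℝ) * α ^ (i : ℕ)) / L) :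
    (∀ μ ∈ {x : ℝ | MapClusterPt x atTop (fun n : ℕ => Int.fract (ξ * α ^ n))},
        ∃ j : ℕ, j ≤ L ∧ μ = (j : ℝ) / L) ∧
      {x : ℝ | MapClusterPt x atTop (fun n : ℕ => Int.fract (ξ * α ^ n))}.Finite := by
  have hβ : (L : ℝ) * ξ = ∑ i : Fin d, (e i : ℝ) * α ^ (i : ℕ) := by
    rw [hξdef]
    field_simp
  obtain ⟨m, hm⟩ := hα.exists_tendsto_mul_pow_sub_intCast (β := L * ξ)
    (hβ ▸ sum_mem fun i _ => mul_mem (intCast_mem _ _) (pow_mem (mem_adjoin_simple_self ℚ α) _))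
    (hβ ▸ IsIntegral.sum _ fun i _ => isIntegral_algebraMap.mul (hα.2.1.pow _))
  have hlim : ∀ μ ∈ {x : ℝ | MapClusterPt x atTop (fun n : ℕ => Int.fract (ξ * α ^ n))},
      ∃ j : ℕ, j ≤ L ∧ μ = (j : ℝ) / L := fun μ hμ =>
    exists_eq_natCast_div_of_mapClusterPt_fract hL (by simpa only [mul_assoc] using hm) hμ
  refine ⟨hlim, ((Set.finite_Iic L).image fun j : ℕ => (j : ℝ) / L).subset ?_⟩
  rintro μ hμ
  obtain ⟨j, hj, rfl⟩ := hlim μ hμ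
  exact ⟨j, hj, rfl⟩

/-- If `α` is a PV-number of degree `d` and `ξ = (e₀ + e₁ α + ⋯ + e_{d-1} α^{d-1})/L > 0`
with integers `e᎐` and `L ∈ ℕ`, then every limit point of the sequence of fractional parts
`{ξ αⁿ}` belongs to `{0, 1/L, …, (L-1)/L, 1}`; in particular the set of limit points is
finite. -/
theorem limit_points_subset_of_pisot (α : ℝ) (hα : IsPVNumber α) (d : ℕ)
    (hd : (minpoly ℚ α).natDegree = d) (e : Fin d → ℤ) (L : ℕ) (hL : 0 < L) (ξ : ℝ)
    (hξdef : ξ = (∑ i : Fin d, (e i : ℝ) * α ^ (i : ℕ)) / L) (hξpos : 0 < ξ) :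
    (∀ μ ∈ {x : ℝ | MapClusterPt x atTop (fun n : ℕ => Int.fract (ξ * α ^ n))},
        ∃ j : ℕ, j ≤ L ∧ μ = (j : ℝ) / L) ∧
      {x : ℝ | MapClusterPt x atTop (fun n : ℕ => Int.fract (ξ * α ^ n))}.Finite :=
  limit_points_subset_of_pisot_general α hα d e L hL ξ hξdef
end

section
/- Let α > 1 be a real algebraic number and let ξ > 0 be a real number. If ‖ξα^n‖ < 1/L(α) for every positive integer n, then α is a PV-number or a Salem number and ξ ∈ ℚ(α). -/
open Polynomial Filter

/-- A Salem number: a real algebraic integer `α > 1` all of whose conjugates lie in the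
closed unit disc, with at least one conjugate on the unit circle. -/
def IsSalemNumber (α : ℝ) : Prop :=
  1 < α ∧ IsIntegral ℤ α ∧
    (∀ z : ℂ, aeval z (minpoly ℚ α) = 0 → z ≠ (α : ℂ) → ‖z‖ ≤ 1) ∧
    ∃ z : ℂ, aeval z (minpoly ℚ α) = 0 ∧ ‖z‖ = 1

/-!
Let `u n` be the integer nearest to `ξ α^(n+1)`. As `p(α) = 0`, the integer `∑ₖ pₖ u(n+k)` equals
`∑ₖ pₖ (u(n+k) - ξ α^(n+k+1))`, of absolute value `< L(α) / L(α) = 1`, so it vanishes: `u`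
satisfies the linear recurrence with characteristic polynomial `p`.

For a root `w` of `p`, pairing a solution of this recurrence with the coefficients of
`p(X) / (X - w)` gives a number that the shift `n ↦ n + 1` multiplies by `w`. The solution
`u n - ξα·αⁿ` is bounded, so its pairing vanishes whenever `|w| > 1`. At `w = α` this says that
the pairing of `u(n + ·)` equals `ξ α^(n+1) p'(α)`: hence `ξ ∈ ℚ(α)`, and the nonzero numbers
`ξ p'(α) α^(n+1)` all lie in the `ℤ`-module spanned by `1, α, …, α^(deg p - 1)`, so `α` is an
algebraic integer. At a conjugate `w ≠ α` with `|w| > 1` the pairing of `u` is the value at `w` of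
an integer polynomial, which then also vanishes at `α`, contradicting `ξ α p'(α) ≠ 0`.
-/

open Finset

theorem eq_zero_of_forall_pow_mul_le {r x C : ℝ} (hr : 1 < r) (hx : 0 ≤ x)
    (h : ∀ n : ℕ, r ^ n * x ≤ C) : x = 0 := by
  by_contra hx0
  have hxpos : 0 < x := lt_of_le_of_ne hx (Ne.symm hx0)
  obtain ⟨n, hn⟩ := pow_unbounded_of_one_lt (C / x) hr
  exact (h n).not_gt ((div_lt_iff₀ hxpos).mp hn)

theorem isIntegral_of_mul_pow_mem {R A : Type*} [CommRing R] [IsNoetherianRing R] [CommRing A]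
    [IsDomain A] [Algebra R A] {N : Submodule R A} (hN : N.FG) {c w : A} (hc : c ≠ 0)
    (h : ∀ n, c * w ^ n ∈ N) : IsIntegral R w := by
  set M := Submodule.span R (Set.range fun n => c * w ^ n)
  have hMN : M ≤ N := Submodule.span_le.mpr (Set.range_subset_iff.mpr h)
  have hM0 : M ≠ ⊥ :=
    (Submodule.ne_bot_iff M).mpr ⟨c * w ^ 0, Submodule.subset_span ⟨0, rfl⟩, by simpa using hc⟩
  refine isIntegral_of_smul_mem_submodule M hM0 (Submodule.FG.of_le hN hMN) w fun m hm => ?_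
  induction hm using Submodule.span_induction with
  | mem _ hx =>
    obtain ⟨n, rfl⟩ := hx
    exact Submodule.subset_span ⟨n + 1, by simp only [smul_eq_mul, pow_succ]; ring⟩
  | zero => simp
  | add _ _ _ _ hx hy => rw [smul_add]; exact M.add_mem hx hy
  | smul a _ _ hx => rw [smul_comm]; exact M.smul_mem a hx

theorem aeval_eq_zero_of_aeval_minpoly_eq_zero {K A B : Type*} [Field K] [CommRing A] [IsDomain A]
    [Algebra K A] [CommRing B] [Nontrivial B] [Algebra K B] {x : A} (hx : IsIntegral K x) {y : B}
    (hy : aeval y (minpoly K x) = 0) {f : K[X]} (hf : aeval y f = 0) : aeval x f = 0 := by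
  obtain ⟨q, rfl⟩ := minpoly.eq_of_irreducible_of_monic (minpoly.irreducible hx) hy
    (minpoly.monic hx) ▸ minpoly.dvd K y hf
  rw [map_mul, minpoly.aeval, zero_mul]

theorem aeval_derivative_ne_zero_of_natDegree_eq {R K A : Type*} [CommRing R] [Field K]
    [CharZero K] [CommRing A] [IsDomain A] [Algebra R K] [FaithfulSMul R K] [Algebra K A]
    [Algebra R A] [IsScalarTower R K A] {α : A} {p : R[X]} (hp : p ≠ 0) (hα : aeval α p = 0)
    (hdeg : p.natDegree = (minpoly K α).natDegree) : aeval α (derivative p) ≠ 0 := by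
  have hinj := FaithfulSMul.algebraMap_injective R K
  set q := p.map (algebraMap R K)
  have hq : q ≠ 0 := (Polynomial.map_ne_zero_iff hinj).mpr hp
  have hqα : aeval α q = 0 := by rwa [aeval_map_algebraMap]
  have hint : IsIntegral K α := IsAlgebraic.isIntegral ⟨q, hq, hqα⟩
  rw [← aeval_map_algebraMap K, ← derivative_map]
  change aeval α (derivative q) ≠ 0
  rw [eq_leadingCoeff_mul_of_monic_of_dvd_of_natDegree_le (minpoly.monic hint)
      (minpoly.dvd K α hqα) (by rw [natDegree_map_eq_of_injective hinj, hdeg]),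
    derivative_C_mul, map_mul, aeval_C]
  exact mul_ne_zero ((_root_.map_ne_zero _).mpr (leadingCoeff_ne_zero.mpr hq))
    ((minpoly.irreducible hint).separable.aeval_derivative_ne_zero (minpoly.aeval K α))

namespace Polynomial

section Pairing

variable {R A : Type*} [CommRing R] [CommRing A] [Algebra R A]

/-- The pairing of `u` with the coefficients of `(p(X) - p(w)) / (X - w)`. -/
noncomputable def quotientPairing (p : R[X]) (w : A) (u : ℕ → A) : A :=
  ∑ k ∈ range (p.natDegree + 1), p.coeff k • ∑ j ∈ range k, u j * w ^ (k - 1 - j)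

def SatisfiesRecurrence (p : R[X]) (u : ℕ → A) : Prop :=
  ∀ n, ∑ k ∈ range (p.natDegree + 1), p.coeff k • u (n + k) = 0

variable {p : R[X]} {w : A} {u v : ℕ → A}

theorem quotientPairing_sub_const_mul (p : R[X]) (w c : A) (u v : ℕ → A) :
    quotientPairing p w (fun j => u j - c * v j) =
      quotientPairing p w u - c * quotientPairing p w v := by
  simp only [quotientPairing, sub_mul, sum_sub_distrib, smul_sub, mul_sum, mul_smul_comm,
    mul_assoc]

theorem quotientPairing_comp_succ (hu : ∑ k ∈ range (p.natDegree + 1), p.coeff k • u k = 0)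
    (hw : aeval w p = 0) :
    quotientPairing p w (fun j => u (j + 1)) = w * quotientPairing p w u := by
  have telescope : ∀ k, ∑ j ∈ range k, u (j + 1) * w ^ (k - 1 - j) -
      w * ∑ j ∈ range k, u j * w ^ (k - 1 - j) = u k - u 0 * w ^ k := by
    intro k
    have := sum_range_sub (fun j => u j * w ^ (k - j)) k
    simp only [Nat.sub_self, pow_zero, mul_one, Nat.sub_zero] at this
    rw [mul_sum, ← sum_sub_distrib, ← this]
    refine sum_congr rfl fun j hj => ?_
    have hj' : k - (j + 1) = k - 1 - j := by omega
    have hj : k - j = k - 1 - j + 1 := by have := mem_range.mp hj; omega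
    rw [hj', hj, pow_succ]
    ring
  rw [← sub_eq_zero]
  calc quotientPairing p w (fun j => u (j + 1)) - w * quotientPairing p w u
      = ∑ k ∈ range (p.natDegree + 1), p.coeff k • (u k - u 0 * w ^ k) := by
        rw [quotientPairing, quotientPairing, mul_sum, ← sum_sub_distrib]
        exact sum_congr rfl fun k _ => by rw [mul_smul_comm, ← smul_sub, telescope]
    _ = 0 := by
        rw [aeval_eq_sum_range] at hw
        simp only [smul_sub, sum_sub_distrib, ← mul_smul_comm, ← mul_sum, hu, hw, mul_zero,
          sub_zero]

theorem SatisfiesRecurrence.quotientPairing_shift (hu : SatisfiesRecurrence p u)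
    (hw : aeval w p = 0) (n : ℕ) :
    quotientPairing p w (fun j => u (n + j)) = w ^ n * quotientPairing p w u := by
  induction n with
  | zero => simp
  | succ n ih =>
    have := quotientPairing_comp_succ (u := fun j => u (n + j)) (hu n) hw
    simp only [← add_assoc, add_right_comm n _ 1] at this
    rw [this, ih, pow_succ', mul_assoc]

theorem SatisfiesRecurrence.sub (hu : SatisfiesRecurrence p u) (hv : SatisfiesRecurrence p v) :
    SatisfiesRecurrence p (u - v) := fun n => by
  simp only [Pi.sub_apply, smul_sub, sum_sub_distrib, hu n, hv n, sub_zero]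

theorem satisfiesRecurrence_const_mul_pow {z : A} (hz : aeval z p = 0) (c : A) :
    SatisfiesRecurrence p (fun n => c * z ^ n) := fun n => by
  rw [aeval_eq_sum_range] at hz
  simp only [pow_add, ← mul_assoc, ← mul_smul_comm, ← mul_sum, hz, mul_zero]

theorem SatisfiesRecurrence.map {B : Type*} [CommRing B] [Algebra R B] (f : A →ₐ[R] B)
    (hu : SatisfiesRecurrence p u) : SatisfiesRecurrence p (fun n => f (u n)) := fun n => by
  simp only [← map_smul, ← map_sum, hu n, map_zero]

theorem quotientPairing_pow_mul_sub (p : R[X]) (z w : A) :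
    quotientPairing p w (z ^ ·) * (z - w) = aeval z p - aeval w p := by
  rw [quotientPairing, sum_mul, aeval_eq_sum_range, aeval_eq_sum_range, ← sum_sub_distrib]
  simp only [smul_mul_assoc, geom_sum₂_mul, smul_sub]

theorem quotientPairing_pow_self (p : R[X]) (w : A) :
    quotientPairing p w (w ^ ·) = aeval w (derivative p) := by
  rw [derivative_apply, sum_over_range _ (fun n => by simp), map_sum, quotientPairing]
  refine sum_congr rfl fun k _ => ?_
  rw [geom_sum₂_self, map_mul, aeval_C, map_pow, aeval_X, map_mul, map_natCast,
    Algebra.smul_def]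
  ring

theorem map_quotientPairing {B : Type*} [CommRing B] [Algebra R B] (f : A →ₐ[R] B) :
    f (quotientPairing p w u) = quotientPairing p (f w) (fun j => f (u j)) := by
  simp only [quotientPairing, map_sum, map_smul, map_mul, map_pow]

theorem aeval_quotientPairing_X (p : R[X]) (u : ℕ → R) (x : A) :
    aeval x (quotientPairing p (X : R[X]) (fun j => C (u j))) =
      quotientPairing p x (fun j => algebraMap R A (u j)) := by
  simp only [map_quotientPairing, aeval_X, aeval_C]

theorem quotientPairing_mem {S : Subalgebra R A} (hw : w ∈ S) (hu : ∀ j, u j ∈ S) :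
    quotientPairing p w u ∈ S :=
  sum_mem fun _ _ => S.smul_mem (sum_mem fun _ _ => mul_mem (hu _) (pow_mem hw _)) _

theorem quotientPairing_algebraMap_mem_span (p : R[X]) (w : A) (u : ℕ → R) :
    quotientPairing p w (fun j => algebraMap R A (u j)) ∈
      Submodule.span R (Set.range fun i : Fin p.natDegree => w ^ (i : ℕ)) := by
  refine sum_mem fun k hk => Submodule.smul_mem _ _ (sum_mem fun j hj => ?_)
  have hi : k - 1 - j < p.natDegree := by
    have := mem_range.mp hk; have := mem_range.mp hj; omega
  rw [← Algebra.smul_def]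
  exact Submodule.smul_mem _ _ (Submodule.subset_span ⟨⟨k - 1 - j, hi⟩, rfl⟩)

theorem isIntegral_of_quotientPairing_eq [IsNoetherianRing R] [IsDomain A] (p : R[X])
    (u : ℕ → R) {a : A} (ha : a ≠ 0)
    (h : ∀ n, quotientPairing p w (fun j => algebraMap R A (u (n + j))) = w ^ n * a) :
    IsIntegral R w :=
  isIntegral_of_mul_pow_mem (Submodule.fg_span (Set.finite_range _)) ha fun n =>
    mul_comm a (w ^ n) ▸ h n ▸ quotientPairing_algebraMap_mem_span p w _

end Pairing

section Bounded

variable {R 𝕜 : Type*} [CommRing R] [NormedField 𝕜] [Algebra R 𝕜] {p : R[X]} {u : ℕ → 𝕜}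

theorem norm_quotientPairing_le (p : R[X]) (w : 𝕜) {B : ℝ} (hu : ∀ j, ‖u j‖ ≤ B) :
    ‖quotientPairing p w u‖ ≤
      B * ∑ k ∈ range (p.natDegree + 1),
        ‖algebraMap R 𝕜 (p.coeff k)‖ * ∑ j ∈ range k, ‖w‖ ^ (k - 1 - j) := by
  rw [quotientPairing, mul_sum]
  refine (norm_sum_le _ _).trans (sum_le_sum fun k _ => ?_)
  rw [Algebra.smul_def, norm_mul, mul_left_comm, mul_sum]
  refine mul_le_mul_of_nonneg_left ((norm_sum_le _ _).trans (sum_le_sum fun j _ => ?_))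
    (norm_nonneg _)
  rw [norm_mul, norm_pow]
  exact mul_le_mul_of_nonneg_right (hu j) (by positivity)

theorem SatisfiesRecurrence.quotientPairing_eq_zero_of_norm_le (hu : SatisfiesRecurrence p u)
    {w : 𝕜} (hw : aeval w p = 0) (hw1 : 1 < ‖w‖) {B : ℝ} (hB : ∀ n, ‖u n‖ ≤ B) :
    quotientPairing p w u = 0 := by
  have hshift := fun n =>
    norm_quotientPairing_le p w (u := fun j => u (n + j)) fun j => hB (n + j)
  simp only [hu.quotientPairing_shift hw, norm_mul, norm_pow] at hshift
  exact norm_eq_zero.mp (eq_zero_of_forall_pow_mul_le hw1 (norm_nonneg _) hshift)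

theorem SatisfiesRecurrence.quotientPairing_eq_of_norm_sub_le (hu : SatisfiesRecurrence p u)
    {z w c : 𝕜} (hz : aeval z p = 0) (hw : aeval w p = 0) (hw1 : 1 < ‖w‖) {B : ℝ}
    (hB : ∀ n, ‖u n - c * z ^ n‖ ≤ B) :
    quotientPairing p w u = c * quotientPairing p w (z ^ ·) := by
  have := (hu.sub (satisfiesRecurrence_const_mul_pow hz c)).quotientPairing_eq_zero_of_norm_le
    hw hw1 hB
  rwa [Pi.sub_def, quotientPairing_sub_const_mul, sub_eq_zero] at this

theorem SatisfiesRecurrence.quotientPairing_self_eq (hu : SatisfiesRecurrence p u) {z c : 𝕜}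
    (hz : aeval z p = 0) (hz1 : 1 < ‖z‖) {B : ℝ} (hB : ∀ n, ‖u n - c * z ^ n‖ ≤ B) :
    quotientPairing p z u = c * aeval z (derivative p) := by
  rw [hu.quotientPairing_eq_of_norm_sub_le hz hz hz1 hB, quotientPairing_pow_self]

theorem SatisfiesRecurrence.quotientPairing_eq_zero_of_ne (hu : SatisfiesRecurrence p u)
    {z w c : 𝕜} (hz : aeval z p = 0) (hw : aeval w p = 0) (hw1 : 1 < ‖w‖) (hne : w ≠ z)
    {B : ℝ} (hB : ∀ n, ‖u n - c * z ^ n‖ ≤ B) :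
    quotientPairing p w u = 0 := by
  have hgeom := quotientPairing_pow_mul_sub p z w
  rw [hz, hw, sub_zero, mul_eq_zero, sub_eq_zero] at hgeom
  rw [hu.quotientPairing_eq_of_norm_sub_le hz hw hw1 hB, hgeom.resolve_right hne.symm, mul_zero]

end Bounded

theorem satisfiesRecurrence_of_abs_sub_lt {p : ℤ[X]} (hp : p ≠ 0) {α c : ℝ}
    (hα : aeval α p = 0) {u : ℕ → ℤ}
    (hu : ∀ n, |(u n : ℝ) - c * α ^ n| < 1 / ∑ i ∈ range (p.natDegree + 1), (|p.coeff i| : ℝ)) :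
    SatisfiesRecurrence p u := by
  intro n
  set L := ∑ i ∈ range (p.natDegree + 1), (|p.coeff i| : ℝ)
  have hlead : 0 < (|p.coeff p.natDegree| : ℝ) :=
    abs_pos.mpr (Int.cast_ne_zero.mpr (leadingCoeff_ne_zero.mpr hp))
  have hL : 0 < L := hlead.trans_le <|
    single_le_sum (f := fun i => (|p.coeff i| : ℝ)) (fun i _ => abs_nonneg _)
      (self_mem_range_succ _)
  have hgeom : ∑ k ∈ range (p.natDegree + 1), (p.coeff k : ℝ) * (c * α ^ (n + k)) = 0 := by
    rw [← mul_zero (c * α ^ n), ← hα, aeval_eq_sum_range, mul_sum]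
    refine sum_congr rfl fun k _ => ?_
    rw [zsmul_eq_mul, pow_add]
    ring
  have hcast : ((∑ k ∈ range (p.natDegree + 1), p.coeff k • u (n + k) : ℤ) : ℝ) =
      ∑ k ∈ range (p.natDegree + 1), (p.coeff k : ℝ) * ((u (n + k) : ℝ) - c * α ^ (n + k)) := by
    simp only [mul_sub, sum_sub_distrib, hgeom, sub_zero, smul_eq_mul]
    push_cast
    rfl
  have hsmall : |((∑ k ∈ range (p.natDegree + 1), p.coeff k • u (n + k) : ℤ) : ℝ)| < 1 :=
    calc _ ≤ ∑ k ∈ range (p.natDegree + 1),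
            |(p.coeff k : ℝ)| * |(u (n + k) : ℝ) - c * α ^ (n + k)| := by
          rw [hcast]
          exact (abs_sum_le_sum_abs _ _).trans_eq (sum_congr rfl fun k _ => abs_mul _ _)
      _ < ∑ k ∈ range (p.natDegree + 1), |(p.coeff k : ℝ)| * (1 / L) :=
          sum_lt_sum (fun k _ => mul_le_mul_of_nonneg_left (hu _).le (abs_nonneg _))
            ⟨p.natDegree, self_mem_range_succ _, mul_lt_mul_of_pos_left (hu _) hlead⟩
      _ = 1 := by rw [← sum_mul, mul_one_div_cancel hL.ne']
  exact Int.abs_lt_one_iff.mp (by exact_mod_cast hsmall)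

end Polynomial

theorem mem_adjoin_of_quotientPairing_eq {E : Type*} [Field E] [CharZero E] {p : ℤ[X]}
    {u : ℕ → ℤ} {α ξ : E} (hα : α ≠ 0) (hD : aeval α (derivative p) ≠ 0)
    (h : quotientPairing p α (fun j => (u j : E)) = ξ * α * aeval α (derivative p)) :
    ξ ∈ IntermediateField.adjoin ℚ {α} := by
  set K := IntermediateField.adjoin ℚ {α}
  have hαK : α ∈ K := IntermediateField.mem_adjoin_simple_self ℚ α
  have hmem : ∀ v : ℕ → E, (∀ j, v j ∈ K) → quotientPairing p α v ∈ K := fun v hv =>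
    quotientPairing_mem (S := K.toSubalgebra.restrictScalars ℤ) hαK hv
  have hξ : ξ = quotientPairing p α (fun j => (u j : E)) / (α * quotientPairing p α (α ^ ·)) := by
    rw [quotientPairing_pow_self, h]
    field_simp
  rw [hξ]
  exact div_mem (hmem _ fun j => intCast_mem K (u j)) (mul_mem hαK (hmem _ fun j => pow_mem hαK j))

theorem norm_le_one_of_aeval_minpoly_eq_zero {p : ℤ[X]} (hp : p ≠ 0) {u : ℕ → ℤ}
    (hu : SatisfiesRecurrence p u) {α c B : ℝ} (hα : aeval α p = 0)
    (hB : ∀ n, |(u n : ℝ) - c * α ^ n| ≤ B)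
    (hpair : quotientPairing p α (fun j => (u j : ℝ)) ≠ 0) {w : ℂ}
    (hw : aeval w (minpoly ℚ α) = 0) (hne : w ≠ α) : ‖w‖ ≤ 1 := by
  by_contra! hw1
  have hint : IsIntegral ℚ α :=
    (IsAlgebraic.extendScalars (algebraMap ℤ ℚ).injective_int ⟨p, hp, hα⟩).isIntegral
  have hpw : aeval w p = 0 := by
    obtain ⟨q, hq⟩ := minpoly.dvd ℚ α (p := p.map (algebraMap ℤ ℚ))
      (by rwa [aeval_map_algebraMap])
    rw [← aeval_map_algebraMap ℚ, hq, map_mul, hw, zero_mul]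
  have hαC : aeval (α : ℂ) p = 0 := by
    rw [← Complex.coe_algebraMap, aeval_algebraMap_apply, hα, map_zero]
  have hBC : ∀ n, ‖(u n : ℂ) - c * (α : ℂ) ^ n‖ ≤ B := fun n => by
    have : (u n : ℂ) - c * (α : ℂ) ^ n = (((u n : ℝ) - c * α ^ n : ℝ) : ℂ) := by push_cast; rfl
    rw [this, Complex.norm_real, Real.norm_eq_abs]
    exact hB n
  set G : ℤ[X] := quotientPairing p X (fun j => C (u j))
  have hGw : aeval w (G.map (algebraMap ℤ ℚ)) = 0 := by
    rw [aeval_map_algebraMap, aeval_quotientPairing_X]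
    simpa using (hu.map (Algebra.ofId ℤ ℂ)).quotientPairing_eq_zero_of_ne hαC hpw hw1 hne hBC
  have hGα := aeval_eq_zero_of_aeval_minpoly_eq_zero hint hw hGw
  rw [aeval_map_algebraMap, aeval_quotientPairing_X] at hGα
  exact hpair (by simpa using hGα)

theorem isPVNumber_or_isSalemNumber {α : ℝ} (hα : 1 < α) (hint : IsIntegral ℤ α)
    (hconj : ∀ z : ℂ, aeval z (minpoly ℚ α) = 0 → z ≠ α → ‖z‖ ≤ 1) :
    IsPVNumber α ∨ IsSalemNumber α := by
  by_cases h : ∀ z : ℂ, aeval z (minpoly ℚ α) = 0 → z ≠ α → ‖z‖ < 1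
  · exact .inl ⟨hα, hint, h⟩
  · push Not at h
    obtain ⟨z, hz, hne, h1⟩ := h
    exact .inr ⟨hα, hint, hconj, z, hz, le_antisymm (hconj z hz hne) h1⟩

theorem pisot_or_salem_of_small_norms_general (α ξ : ℝ) (hα : 1 < α) (hξ : 0 < ξ)
    (p : Polynomial ℤ) (hp0 : p ≠ 0) (hproot : aeval α p = 0)
    (hpdeg : p.natDegree = (minpoly ℚ α).natDegree)
    (hsmall : ∀ n : ℕ, 1 ≤ n →
      min (Int.fract (ξ * α ^ n)) (1 - Int.fract (ξ * α ^ n)) <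
        1 / (∑ i ∈ Finset.range (p.natDegree + 1), (|p.coeff i| : ℝ))) :
    (IsPVNumber α ∨ IsSalemNumber α) ∧ ξ ∈ IntermediateField.adjoin ℚ ({α} : Set ℝ) := by
  set u : ℕ → ℤ := fun n => round (ξ * α ^ (n + 1))
  have hnear : ∀ n, |(u n : ℝ) - ξ * α * α ^ n| <
      1 / ∑ i ∈ Finset.range (p.natDegree + 1), (|p.coeff i| : ℝ) := fun n => by
    rw [abs_sub_comm, mul_assoc, ← pow_succ']
    exact (abs_sub_round_eq_min _).trans_lt (hsmall _ n.succ_pos)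
  have hu := satisfiesRecurrence_of_abs_sub_lt hp0 hproot hnear
  have hD : aeval α (derivative p) ≠ 0 :=
    aeval_derivative_ne_zero_of_natDegree_eq (K := ℚ) hp0 hproot hpdeg
  have ha : ξ * α * aeval α (derivative p) ≠ 0 := mul_ne_zero (by positivity) hD
  have hpair : ∀ n, quotientPairing p α (fun j => (u (n + j) : ℝ)) =
      α ^ n * (ξ * α * aeval α (derivative p)) := fun n => by
    have huR := hu.map (Algebra.ofId ℤ ℝ)
    simp only [Algebra.ofId_apply, algebraMap_int_eq, Int.coe_castRingHom] at huR
    rw [huR.quotientPairing_shift hproot, huR.quotientPairing_self_eq hproot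
      (by rwa [Real.norm_of_nonneg (by linarith)]) fun n => (hnear n).le]
  have hpair0 : quotientPairing p α (fun j => (u j : ℝ)) = ξ * α * aeval α (derivative p) := by
    simpa using hpair 0
  refine ⟨isPVNumber_or_isSalemNumber hα ?_ fun w hw hne => ?_,
    mem_adjoin_of_quotientPairing_eq (by positivity) hD hpair0⟩
  · exact isIntegral_of_quotientPairing_eq p u ha fun n => by simpa using hpair n
  · exact norm_le_one_of_aeval_minpoly_eq_zero hp0 hu hproot (fun n => (hnear n).le)
      (hpair0.trans_ne ha) hw hne

/-- Let `α > 1` be a real algebraic number with primitive integer minimal polynomial `p`,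
and set `L(α) := ∑ |coefficients of p|`. If `ξ > 0` satisfies `‖ξ αⁿ‖ < 1/L(α)` for every
`n ≥ 1` (where `‖x‖ = min({x}, 1 - {x})` is the distance to the nearest integer), then `α`
is a PV-number or a Salem number and `ξ ∈ ℚ(α)`. -/
theorem pisot_or_salem_of_small_norms (α ξ : ℝ) (hα : 1 < α) (hξ : 0 < ξ)
    (p : Polynomial ℤ) (hp0 : p ≠ 0) (hproot : aeval α p = 0) (hprim : p.IsPrimitive)
    (hpdeg : p.natDegree = (minpoly ℚ α).natDegree)
    (hsmall : ∀ n : ℕ, 1 ≤ n →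
      min (Int.fract (ξ * α ^ n)) (1 - Int.fract (ξ * α ^ n)) <
        1 / (∑ i ∈ Finset.range (p.natDegree + 1), (|p.coeff i| : ℝ))) :
    (IsPVNumber α ∨ IsSalemNumber α) ∧ ξ ∈ IntermediateField.adjoin ℚ ({α} : Set ℝ) :=
  pisot_or_salem_of_small_norms_general α ξ hα hξ p hp0 hproot hpdeg hsmall
end

section
/- Let α > 1 and ξ > 0 be real numbers, and suppose the set S of limit points of the sequence of fractional parts {ξα^n}, n ∈ ℕ, is finite, say S = {μ_1, …, μ_q}. Then for any positive integer L, the set S_L of limit points of the sequence {Lξα^n}, n ∈ ℕ, is a subset of {0, {Lμ_1}, …, {Lμ_q}, 1}. -/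
open Filter

private lemma fract_mul_bound (c : ℝ) (m : ℤ) (h : |c - m| < 1) :
    Int.fract c * (1 - Int.fract c) ≤ |c - m| := by
  have h' := abs_lt.1 h
  rcases le_or_gt (m : ℝ) c with hc | hc
  · have hf : ⌊c⌋ = m := Int.floor_eq_iff.mpr ⟨hc, by push_cast; linarith⟩
    have hfr : Int.fract c = c - m := by rw [Int.fract, hf]
    rw [hfr, abs_of_nonneg (by linarith)]
    nlinarith
  · have hf : ⌊c⌋ = m - 1 := Int.floor_eq_iff.mpr ⟨by push_cast; linarith, by push_cast; linarith⟩
    have hfr : Int.fract c = c - m + 1 := by rw [Int.fract, hf]; push_cast; ring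
    rw [hfr, abs_of_nonpos (by linarith)]
    nlinarith

/-- If the set `S` of limit points of the fractional parts `{ξ αⁿ}`, `n ∈ ℕ`, is finite,
then for any positive integer `L` the set of limit points of `{L ξ αⁿ}` is contained in
`{0, 1} ∪ {L μ} for μ ∈ S`. -/
theorem limit_points_of_mul_subset (α ξ : ℝ) (hα : 1 < α) (hξ : 0 < ξ) (S : Set ℝ)
    (hS : S = {x : ℝ | MapClusterPt x atTop (fun n : ℕ => Int.fract (ξ * α ^ n))})
    (hfin : S.Finite) (L : ℕ) (hL : 0 < L) :
    {x : ℝ | MapClusterPt x atTop (fun n : ℕ => Int.fract ((L : ℝ) * ξ * α ^ n))} ⊆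
      {0, 1} ∪ (fun μ : ℝ => Int.fract ((L : ℝ) * μ)) '' S := by
  intro x hx
  -- key identity: fract (L ξ αⁿ) = fract (L · fract (ξ αⁿ))
  have key : ∀ n : ℕ, Int.fract ((L : ℝ) * ξ * α ^ n)
      = Int.fract ((L : ℝ) * Int.fract (ξ * α ^ n)) := by
    intro n
    have : (L : ℝ) * ξ * α ^ n
        = ((L * ⌊ξ * α ^ n⌋ : ℤ) : ℝ) + (L : ℝ) * Int.fract (ξ * α ^ n) := by
      rw [Int.fract]; push_cast; ring
    rw [this, Int.fract_intCast_add]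
  -- extract a subsequence along which fract (L ξ αⁿ) → x
  obtain ⟨φ, hφ, hφt⟩ := TopologicalSpace.FirstCountableTopology.tendsto_subseq hx
  -- the fractional parts fract (ξ α^{φ n}) live in the compact set [0,1]
  set b : ℕ → ℝ := fun n => Int.fract (ξ * α ^ (φ n)) with hb
  obtain ⟨μ, hμIcc, ψ, hψ, hbt⟩ :=
    (isCompact_Icc (a := (0:ℝ)) (b := 1)).tendsto_subseq
      (x := b) (fun n => ⟨Int.fract_nonneg _, (Int.fract_lt_one _).le⟩)
  -- μ is a cluster point of fract (ξ αⁿ), hence μ ∈ S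
  have hμS : μ ∈ S := by
    rw [hS]
    exact MapClusterPt.of_comp ((hφ.comp hψ).tendsto_atTop) hbt.mapClusterPt
  -- the sequence c k = L · fract (ξ α^{φ (ψ k)}) tends to L μ
  set c : ℕ → ℝ := fun k => (L : ℝ) * b (ψ k) with hc
  have hct : Filter.Tendsto c atTop (nhds ((L : ℝ) * μ)) := hbt.const_mul _
  -- fract ∘ c is a subsequence of fract (L ξ αⁿ), hence tends to x
  have hfc : (fun k => Int.fract (c k))
      = (fun n : ℕ => Int.fract ((L : ℝ) * ξ * α ^ n)) ∘ (φ ∘ ψ) := by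
    funext k
    simp only [hc, hb, Function.comp_apply, key]
  have hx' : Filter.Tendsto (fun k => Int.fract (c k)) atTop (nhds x) := by
    rw [hfc]
    exact hφt.comp hψ.tendsto_atTop
  by_cases hint : (L : ℝ) * μ = (⌊(L : ℝ) * μ⌋ : ℝ)
  · -- L μ is an integer: then x = 0 or x = 1
    left
    set m : ℤ := ⌊(L : ℝ) * μ⌋ with hm
    have hcm : Filter.Tendsto (fun k => |c k - m|) atTop (nhds 0) := by
      have : Filter.Tendsto (fun k => c k - m) atTop (nhds 0) := by
        have := hct.sub_const (m : ℝ)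
        rwa [hint, sub_self] at this
      simpa using this.abs
    have hprod : Filter.Tendsto (fun k => Int.fract (c k) * (1 - Int.fract (c k)))
        atTop (nhds 0) := by
      apply squeeze_zero' (g := fun k => |c k - m|)
      · filter_upwards with k
        nlinarith [Int.fract_nonneg (c k), Int.fract_lt_one (c k)]
      · filter_upwards [hcm.eventually (gt_mem_nhds one_pos)] with k hk
        exact fract_mul_bound (c k) m hk
      · exact hcm
    have hprod' : Filter.Tendsto (fun k => Int.fract (c k) * (1 - Int.fract (c k)))
        atTop (nhds (x * (1 - x))) :=
      hx'.mul ((tendsto_const_nhds).sub hx')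
    have := tendsto_nhds_unique hprod' hprod
    rcases mul_eq_zero.1 this with h | h
    · exact Or.inl h
    · exact Or.inr (sub_eq_zero.mp h).symm
  · -- L μ is not an integer: fract is continuous at L μ, so x = fract (L μ)
    right
    have hcont : ContinuousAt Int.fract ((L : ℝ) * μ) := continuousAt_fract hint
    have : Filter.Tendsto (fun k => Int.fract (c k)) atTop
        (nhds (Int.fract ((L : ℝ) * μ))) := hcont.tendsto.comp hct
    exact ⟨μ, hμS, (tendsto_nhds_unique hx' this).symm⟩
end

section
/- Let α > 1 be a real algebraic number and ξ > 0 a real number, and suppose the set of limit points of the sequence of fractional parts {ξα^n}, n ∈ ℕ, is finite. Then for every ε > 0 there exist positive integers m, r, L with m > r such that ‖Lξ(α^m − α^r)α^n‖ < 2ε for every positive integer n. -/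
/-!
If the fractional parts `uₙ = {ξαⁿ}` have a finite set `S` of limit points, then eventually
every `uₙ` lies within `δ` of `S`, and simultaneous Dirichlet approximation gives one `L ≥ 1`
making `L(s - t)` nearly an integer for all `s, t ∈ S`. As `ξ(α^m - α^r)αⁿ = ξα^(m+n) - ξα^(r+n)`
differs from `u_(m+n) - u_(r+n)` by an integer, for large `r < m` the number `Lξ(α^m - α^r)αⁿ`
is within `2Lδ` of some `L(s - t) + ℤ`, hence close to an integer.
-/

open Filter Metric

lemma IsCompact.exists_lt_dist_lt {X : Type*} [PseudoMetricSpace X] {K : Set X}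
    (hK : IsCompact K) {u : ℕ → X} (hu : ∀ n, u n ∈ K) {ε : ℝ} (hε : 0 < ε) :
    ∃ a b, a < b ∧ dist (u a) (u b) < ε := by
  obtain ⟨_, -, φ, hφ, hlim⟩ := hK.tendsto_subseq hu
  obtain ⟨N, hN⟩ := Metric.cauchySeq_iff'.1 hlim.cauchySeq ε hε
  exact ⟨φ N, φ (N + 1), hφ N.lt_succ_self, by simpa [dist_comm] using hN (N + 1) N.le_succ⟩

lemma exists_pos_nat_abs_mul_sub_intCast_lt {ι : Type*} [Finite ι] (d : ι → ℝ) {ε : ℝ}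
    (hε : 0 < ε) : ∃ L : ℕ, 0 < L ∧ ∀ i, ∃ z : ℤ, |L * d i - z| < ε := by
  cases nonempty_fintype ι
  let v : ℕ → ι → ℝ := fun L i => Int.fract (L * d i)
  have hv : ∀ L, v L ∈ Set.univ.pi fun _ => Set.Icc (0 : ℝ) 1 :=
    fun L i _ => ⟨Int.fract_nonneg _, (Int.fract_lt_one _).le⟩
  obtain ⟨a, b, hab, hdist⟩ :=
    (isCompact_univ_pi fun _ => isCompact_Icc).exists_lt_dist_lt hv hε
  refine ⟨b - a, Nat.sub_pos_of_lt hab, fun i => ⟨⌊b * d i⌋ - ⌊a * d i⌋, ?_⟩⟩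
  calc |((b - a : ℕ) : ℝ) * d i - ((⌊b * d i⌋ - ⌊a * d i⌋ : ℤ) : ℝ)|
        = dist (v a i) (v b i) := by
        rw [Real.dist_eq, abs_sub_comm, Nat.cast_sub hab.le]
        simp only [v, Int.fract]
        push_cast
        ring_nf
    _ ≤ dist (v a) (v b) := dist_le_pi_dist _ _ i
    _ < ε := hdist

lemma IsCompact.eventually_mem_thickening_mapClusterPt {X ι : Type*} [PseudoMetricSpace X]
    {K : Set X} (hK : IsCompact K) {l : Filter ι} {u : ι → X} (hu : ∀ᶠ i in l, u i ∈ K)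
    {δ : ℝ} (hδ : 0 < δ) : ∀ᶠ i in l, u i ∈ thickening δ {x | MapClusterPt x l u} :=
  hK.tendsto_nhdsSet_of_mapClusterPt hu (fun _ _ hx => hx)
    (isOpen_thickening.mem_nhdsSet.2 (self_subset_thickening hδ _))

lemma exists_abs_natCast_mul_sub_sub_intCast_lt {a b s t δ ε : ℝ} {L : ℕ} {z : ℤ}
    (ha : |Int.fract a - s| < δ) (hb : |Int.fract b - t| < δ) (hz : |L * (s - t) - z| < ε) :
    ∃ w : ℤ, |L * (a - b) - w| < 2 * L * δ + ε := by
  refine ⟨L * (⌊a⌋ - ⌊b⌋) + z, ?_⟩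
  have hL : (0 : ℝ) ≤ L := L.cast_nonneg
  calc |L * (a - b) - ((L * (⌊a⌋ - ⌊b⌋) + z : ℤ) : ℝ)|
        = |L * (Int.fract a - s) - L * (Int.fract b - t) + (L * (s - t) - z)| := by
          rw [Int.fract, Int.fract]
          push_cast
          ring_nf
      _ ≤ L * |Int.fract a - s| + L * |Int.fract b - t| + |L * (s - t) - z| := by
          grw [abs_add_le, abs_sub, abs_mul, abs_mul, Nat.abs_cast]
      _ < 2 * L * δ + ε := by
          nlinarith [mul_le_mul_of_nonneg_left ha.le hL, mul_le_mul_of_nonneg_left hb.le hL]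

theorem exists_small_norms_of_finite_limit_points_general (α ξ : ℝ)
    (hfin : {x : ℝ | MapClusterPt x atTop (fun n : ℕ => Int.fract (ξ * α ^ n))}.Finite) :
    ∀ ε : ℝ, 0 < ε → ∃ m r L : ℕ, 0 < r ∧ r < m ∧ 0 < L ∧
      ∀ n : ℕ, 1 ≤ n →
        min (Int.fract ((L : ℝ) * ξ * (α ^ m - α ^ r) * α ^ n))
            (1 - Int.fract ((L : ℝ) * ξ * (α ^ m - α ^ r) * α ^ n)) < 2 * ε := by
  intro ε hε
  set S := {x : ℝ | MapClusterPt x atTop (fun n : ℕ => Int.fract (ξ * α ^ n))}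
  have : Finite S := hfin.to_subtype
  obtain ⟨L, hL, hLS⟩ := exists_pos_nat_abs_mul_sub_intCast_lt
    (fun p : S × S => (p.1 - p.2 : ℝ)) hε
  have hδ : 0 < ε / (2 * L) := by positivity
  obtain ⟨N, hN⟩ := eventually_atTop.1 <| isCompact_Icc.eventually_mem_thickening_mapClusterPt
    (Eventually.of_forall fun n => ⟨Int.fract_nonneg (ξ * α ^ n), (Int.fract_lt_one _).le⟩) hδ
  refine ⟨N + 2, N + 1, L, N.succ_pos, (N + 1).lt_succ_self, hL, fun n _ => ?_⟩
  obtain ⟨s, hs, hus⟩ := mem_thickening_iff.1 (hN (N + 2 + n) (by omega))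
  obtain ⟨t, ht, hut⟩ := mem_thickening_iff.1 (hN (N + 1 + n) (by omega))
  obtain ⟨z, hz⟩ := hLS (⟨s, hs⟩, ⟨t, ht⟩)
  obtain ⟨w, hw⟩ := exists_abs_natCast_mul_sub_sub_intCast_lt
    (Real.dist_eq _ _ ▸ hus) (Real.dist_eq _ _ ▸ hut) hz
  rw [← abs_sub_round_eq_min]
  have hsplit : (L : ℝ) * ξ * (α ^ (N + 2) - α ^ (N + 1)) * α ^ n
      = L * (ξ * α ^ (N + 2 + n) - ξ * α ^ (N + 1 + n)) := by ring
  calc _ ≤ |L * (ξ * α ^ (N + 2 + n) - ξ * α ^ (N + 1 + n)) - w| := hsplit ▸ round_le _ _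
    _ < 2 * L * (ε / (2 * L)) + ε := hw
    _ = 2 * ε := by field_simp; ring

/-- Let `α > 1` be a real algebraic number and `ξ > 0` real, and suppose the set of limit
points of `{ξ αⁿ}`, `n ∈ ℕ`, is finite. Then for every `ε > 0` there are positive integers
`m > r` and `L` such that `‖L ξ (α^m - α^r) αⁿ‖ < 2ε` for every `n ≥ 1`, where
`‖x‖ = min({x}, 1 - {x})` is the distance from `x` to the nearest integer. -/
theorem exists_small_norms_of_finite_limit_points (α ξ : ℝ) (hα : 1 < α)
    (halg : IsAlgebraic ℚ α) (hξ : 0 < ξ)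
    (hfin : {x : ℝ | MapClusterPt x atTop (fun n : ℕ => Int.fract (ξ * α ^ n))}.Finite) :
    ∀ ε : ℝ, 0 < ε → ∃ m r L : ℕ, 0 < r ∧ r < m ∧ 0 < L ∧
      ∀ n : ℕ, 1 ≤ n →
        min (Int.fract ((L : ℝ) * ξ * (α ^ m - α ^ r) * α ^ n))
            (1 - Int.fract ((L : ℝ) * ξ * (α ^ m - α ^ r) * α ^ n)) < 2 * ε :=
  exists_small_norms_of_finite_limit_points_general α ξ hfin
end

section
/- Let p > q > 1 be integers with gcd(p, q) = 1. Then the set of limit points of the sequence of fractional parts {(p/q)^n}, n = 1, 2, 3, …, is infinite. -/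
open Filter

/-- **Vijayaraghavan's theorem.** If `p > q > 1` are coprime integers, then the set of
limit points of the sequence of fractional parts `{(p/q)ⁿ}`, `n = 1, 2, 3, …`, is
infinite. -/
theorem infinite_limit_points_of_rational_powers (p q : ℕ) (hq : 1 < q) (hpq : q < p)
    (hco : Nat.Coprime p q) :
    {x : ℝ | MapClusterPt x atTop (fun n : ℕ => Int.fract (((p : ℝ) / q) ^ n))}.Infinite := by
  classical
  by_contra hcon
  rw [Set.not_infinite] at hcon
  set r : ℝ := (p : ℝ) / q with hr
  set f : ℕ → ℝ := fun n : ℕ => Int.fract (r ^ n) with hfdef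
  set L : Set ℝ := {x : ℝ | MapClusterPt x atTop f} with hL
  have hq0 : (0:ℝ) < q := by exact_mod_cast Nat.lt_of_lt_of_le Nat.zero_lt_one hq.le
  have hp0 : (0:ℝ) < p := by
    have : 0 < p := by omega
    exact_mod_cast this
  have hqne : (q:ℝ) ≠ 0 := ne_of_gt hq0
  have hr1 : 1 < r := (one_lt_div hq0).2 (by exact_mod_cast hpq)
  have hf01 : ∀ n, f n ∈ Set.Icc (0:ℝ) 1 :=
    fun n => ⟨Int.fract_nonneg _, (Int.fract_lt_one _).le⟩
  -- key integer relation : p * f n - q * f (n+1) is an integer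
  have hkey : ∀ n : ℕ, ∃ m : ℤ, (m : ℝ) = p * f n - q * f (n + 1) := by
    intro n
    refine ⟨q * ⌊r ^ (n+1)⌋ - p * ⌊r ^ n⌋, ?_⟩
    have h1 : (q : ℝ) * r ^ (n+1) = p * r ^ n := by
      rw [pow_succ, hr]; field_simp
    simp only [hfdef, Int.fract]
    push_cast
    linarith
  -- injectivity of f on indices ≥ 1
  have hinj : ∀ m n : ℕ, 1 ≤ m → m < n → f m ≠ f n := by
    intro m n hm hmn hEq
    obtain ⟨z, hz⟩ := Int.fract_eq_fract.1 hEq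
    obtain ⟨t, ht⟩ : ∃ t : ℕ, n = m + t := ⟨n - m, by omega⟩
    have ht1 : 1 ≤ t := by omega
    have e1 : r ^ m * (q:ℝ) ^ n = p ^ m * q ^ t := by
      rw [hr, div_pow, ht, pow_add]; field_simp
    have e2 : r ^ n * (q:ℝ) ^ n = p ^ n := by
      rw [hr, div_pow]; field_simp
    have hreal : (p:ℝ) ^ m * q ^ t - p ^ n = z * q ^ n := by
      linear_combination (-1 : ℝ) * e1 + e2 + (q:ℝ) ^ n * hz
    have hint : (p:ℤ) ^ m * q ^ t - p ^ n = z * q ^ n := by exact_mod_cast hreal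
    have hdvd : (q:ℤ) ∣ (p:ℤ) ^ n := by
      have : (p:ℤ) ^ n = p ^ m * q ^ t - z * q ^ n := by linarith
      rw [this]
      exact dvd_sub (Dvd.dvd.mul_left (dvd_pow_self _ (by omega)) _)
        (Dvd.dvd.mul_left (dvd_pow_self _ (by omega)) _)
    have hdvd' : q ∣ p ^ n := by exact_mod_cast hdvd
    have : q = 1 := (Nat.Coprime.pow_right n hco.symm).eq_one_of_dvd hdvd'
    omega
  -- eventually within δ of the set of cluster points
  have hev : ∀ δ : ℝ, 0 < δ → ∀ᶠ n in atTop, ∃ ℓ ∈ L, |f n - ℓ| ≤ δ := by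
    intro δ hδ
    by_contra hbad
    rw [Filter.not_eventually] at hbad
    have hne : NeBot (atTop ⊓ 𝓟 {n : ℕ | ¬ ∃ ℓ ∈ L, |f n - ℓ| ≤ δ}) :=
      frequently_iff_neBot.1 hbad
    have hmap : Filter.map f (atTop ⊓ 𝓟 {n : ℕ | ¬ ∃ ℓ ∈ L, |f n - ℓ| ≤ δ})
        ≤ 𝓟 (Set.Icc (0:ℝ) 1) := by
      rw [Filter.le_principal_iff, Filter.mem_map]
      exact Filter.univ_mem' (fun n => hf01 n)
    obtain ⟨x, hx01, hx⟩ := (isCompact_Icc (a := (0:ℝ)) (b := 1)).exists_mapClusterPt hmap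
    have hxL : x ∈ L := by
      exact ClusterPt.mono hx (Filter.map_mono inf_le_left)
    -- x is in the closure of the "far" set
    have hfar : Filter.map f (atTop ⊓ 𝓟 {n : ℕ | ¬ ∃ ℓ ∈ L, |f n - ℓ| ≤ δ})
        ≤ 𝓟 {y : ℝ | ∀ ℓ ∈ L, δ ≤ |y - ℓ|} := by
      rw [Filter.le_principal_iff, Filter.mem_map]
      refine Filter.mem_of_superset (Filter.mem_inf_of_right (Filter.mem_principal_self _)) ?_
      intro n hn
      simp only [Set.mem_setOf_eq] at hn ⊢
      intro ℓ hℓ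
      by_contra hlt
      exact hn ⟨ℓ, hℓ, (not_le.1 hlt).le⟩
    have hclosed : IsClosed {y : ℝ | ∀ ℓ ∈ L, δ ≤ |y - ℓ|} := by
      have : {y : ℝ | ∀ ℓ ∈ L, δ ≤ |y - ℓ|} = ⋂ ℓ ∈ L, {y : ℝ | δ ≤ |y - ℓ|} := by
        ext y; simp
      rw [this]
      exact isClosed_biInter fun ℓ _ =>
        isClosed_le continuous_const ((continuous_id.sub continuous_const).abs)
    have hxfar : x ∈ {y : ℝ | ∀ ℓ ∈ L, δ ≤ |y - ℓ|} := by
      have hcp : ClusterPt x (𝓟 {y : ℝ | ∀ ℓ ∈ L, δ ≤ |y - ℓ|}) :=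
        ClusterPt.mono hx hfar
      rw [← mem_closure_iff_clusterPt] at hcp
      rwa [hclosed.closure_eq] at hcp
    have := hxfar x hxL
    simp at this
    linarith
  -- the finite set of "distances to integers" of p*a - q*b for a b cluster points
  set g : ℝ → ℝ → ℝ := fun a b =>
    |(p:ℝ) * a - q * b - round ((p:ℝ) * a - q * b)| with hg
  have hTfin : (Set.image2 g L L).Finite := Set.Finite.image2 _ hcon hcon
  set F : Finset ℝ := insert 1 (hTfin.toFinset.filter (· ≠ 0)) with hF
  have hFne : F.Nonempty := ⟨1, Finset.mem_insert_self _ _⟩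
  set ρ : ℝ := F.min' hFne with hρ
  have hFpos : ∀ x ∈ F, (0:ℝ) < x := by
    intro x hx
    rw [hF, Finset.mem_insert, Finset.mem_filter, Set.Finite.mem_toFinset] at hx
    rcases hx with rfl | ⟨hmem, hne0⟩
    · norm_num
    · obtain ⟨a, ha, b, hb, hab⟩ := hmem
      have h0 : (0:ℝ) ≤ x := by rw [← hab]; exact abs_nonneg _
      exact lt_of_le_of_ne h0 (Ne.symm hne0)
  have hρpos : 0 < ρ := hFpos _ (F.min'_mem hFne)
  have hρ1 : ρ ≤ 1 := Finset.min'_le _ _ (Finset.mem_insert_self _ _)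
  have hρle : ∀ a ∈ L, ∀ b ∈ L, g a b ≠ 0 → ρ ≤ g a b := by
    intro a ha b hb hne0
    apply Finset.min'_le
    rw [hF, Finset.mem_insert, Finset.mem_filter, Set.Finite.mem_toFinset]
    exact Or.inr ⟨Set.mem_image2_of_mem ha hb, hne0⟩
  have hpq0 : (0:ℝ) < p + q := by linarith
  set δ : ℝ := ρ / (2 * (p + q)) with hδdef
  have hδ : 0 < δ := by positivity
  obtain ⟨N, hN⟩ := Filter.eventually_atTop.1 (hev δ hδ)
  have hN' : ∀ k : ℕ, ∃ ℓ, ℓ ∈ L ∧ |f (N + k) - ℓ| ≤ δ := by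
    intro k
    obtain ⟨ℓ, hℓ, hd⟩ := hN (N + k) (Nat.le_add_right _ _)
    exact ⟨ℓ, hℓ, hd⟩
  choose ℓf hmem hdist using hN'
  -- the recursion for the errors
  set E : ℕ → ℝ := fun k => f (N + k) - ℓf k with hE
  have hrec : ∀ k : ℕ, (q:ℝ) * E (k+1) = p * E k := by
    intro k
    obtain ⟨m, hm⟩ := hkey (N + k)
    have hstep : N + k + 1 = N + (k + 1) := by omega
    rw [hstep] at hm
    set a := ℓf k
    set b := ℓf (k+1)
    set s : ℝ := (p:ℝ) * a - q * b with hs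
    have hab : |s - m| ≤ ρ / 2 := by
      have h1 : s - m = p * (a - f (N+k)) - q * (b - f (N+(k+1))) := by
        rw [hs, hm]; ring
      have h2 : |s - (m:ℝ)| ≤ (p:ℝ) * |f (N+k) - a| + q * |f (N+(k+1)) - b| := by
        rw [h1]
        calc |(p:ℝ) * (a - f (N+k)) - q * (b - f (N+(k+1)))|
            ≤ |(p:ℝ) * (a - f (N+k))| + |(q:ℝ) * (b - f (N+(k+1)))| := abs_sub _ _
          _ = (p:ℝ) * |f (N+k) - a| + q * |f (N+(k+1)) - b| := by
              rw [abs_mul, abs_mul, abs_of_pos hp0, abs_of_pos hq0, abs_sub_comm,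
                abs_sub_comm (b : ℝ)]
      have h3 : (p:ℝ) * |f (N+k) - a| + q * |f (N+(k+1)) - b| ≤ (p + q) * δ := by
        have d1 := hdist k
        have d2 := hdist (k+1)
        nlinarith
      have h4 : ((p:ℝ) + q) * δ = ρ / 2 := by
        rw [hδdef]; field_simp
      linarith
    -- s is an integer and equals m
    have hsint : s = round s := by
      by_contra hne
      have hgne : g a b ≠ 0 := by
        rw [hg]
        simp only [← hs]
        intro habs
        apply hne
        have := abs_eq_zero.1 habs
        linarith
      have h5 : ρ ≤ |s - round s| := hρle a (hmem k) b (hmem (k+1)) hgne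
      have h6 : |s - round s| ≤ |s - m| := round_le s m
      linarith
    have hsm : s = m := by
      have h7 : |((round s : ℤ) : ℝ) - ((m : ℤ) : ℝ)| ≤ ρ / 2 := by
        rw [← hsint]; exact hab
      have h8 : |round s - m| < (1:ℤ) := by
        have hc : ((|round s - m| : ℤ) : ℝ) < 1 := by
          push_cast
          have := abs_sub_abs_le_abs_sub ((round s : ℝ)) ((m : ℝ))
          calc |(round s : ℝ) - (m : ℝ)| ≤ ρ / 2 := h7
            _ < 1 := by linarith
        exact_mod_cast hc
      have h9 := abs_lt.1 h8
      have : round s = m := by omega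
      rw [hsint, this]
    have hEq1 : (q:ℝ) * f (N+(k+1)) = p * f (N+k) - m := by linarith [hm]
    rw [hE]
    simp only
    rw [mul_sub, mul_sub, hEq1, ← hsm, hs]
    ring
  -- the error at the start must vanish
  have hEpow : ∀ k : ℕ, E k = r ^ k * E 0 := by
    intro k
    induction k with
    | zero => simp
    | succ k ih =>
      have := hrec k
      have : E (k+1) = r * E k := by
        rw [hr]; field_simp; linarith [hrec k]
      rw [this, ih, pow_succ]; ring
  have hE0 : E 0 = 0 := by
    by_contra hne
    have habs : 0 < |E 0| := abs_pos.2 hne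
    obtain ⟨k, hk⟩ := pow_unbounded_of_one_lt (δ / |E 0|) hr1
    have h9 : |E k| ≤ δ := hdist k
    rw [hEpow k, abs_mul, abs_of_pos (by positivity : (0:ℝ) < r ^ k)] at h9
    have : δ < r ^ k * |E 0| := by
      rw [div_lt_iff₀ habs] at hk; linarith
    linarith
  have hfL : ∀ k : ℕ, f (N + k) ∈ L := by
    intro k
    have : E k = 0 := by rw [hEpow k, hE0]; ring
    have : f (N + k) = ℓf k := by
      have := this; rw [hE] at this; simp only at this; linarith
    rw [this]; exact hmem k
  -- contradiction : infinitely many distinct values in the finite set L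
  have : L.Infinite := by
    refine Set.infinite_of_injective_forall_mem
      (f := fun k : ℕ => f (N + 1 + k)) ?_ ?_
    · intro k1 k2 h12
      by_contra hne
      rcases Nat.lt_or_ge k1 k2 with h | h
      · exact hinj (N+1+k1) (N+1+k2) (by omega) (by omega) h12
      · have h' : k2 < k1 := by omega
        exact hinj (N+1+k2) (N+1+k1) (by omega) (by omega) h12.symm
    · intro k
      show f (N + 1 + k) ∈ L
      have h : N + 1 + k = N + (1 + k) := by omega
      rw [h]
      exact hfL (1 + k)
  exact this hcon
end

section
/- Let b ≥ 2 be a rational integer and let ξ = Σ_{k=0}^{∞} b^{−k!}. Then the set of limit points of the sequence of fractional parts {ξ b^n}, n = 1, 2, 3, …, is exactly the countable set {0, b^{−1}, b^{−2}, b^{−3}, …}. -/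
/-!
If `k! ≤ n < (k+1)!`, the terms `b^(n - i!)` with `i ≤ k` are integers, so `{ξ bⁿ}` is the
tail `∑_{i > k} b^(n - i!)`: its leading term is `b^(-m)` with `m = (k+1)! - n ≥ 1`, and the
rest is below `2 b^(-(k+1))` because the next exponent `(k+2)!` exceeds `n` by at least `k + 1`.
Hence every limit point lies in the closed set `{0} ∪ {b^(-m)}`, and choosing
`n = (k+1)! - m` with `k → ∞` realizes each `b^(-m)`, hence also their limit `0`.
-/

open Filter Topology Set Metric
open scoped Nat

theorem Nat.exists_factorial_le_lt_factorial_succ {n : ℕ} (hn : 1 ≤ n) :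
    ∃ k, k ! ≤ n ∧ n < (k + 1)! := by
  classical
  have h : ∃ k, n < (k + 1)! := ⟨n, n.lt_succ_self.trans_le (Nat.self_le_factorial _)⟩
  refine ⟨Nat.find h, ?_, Nat.find_spec h⟩
  rcases hk : Nat.find h with _ | k
  · simpa using hn
  · exact not_lt.1 (Nat.find_min h (hk ▸ k.lt_succ_self))

theorem Nat.add_succ_le_factorial_succ_succ {n k : ℕ} (hn : n < (k + 1)!) :
    n + (k + 1) ≤ (k + 2)! := by
  rw [Nat.factorial_succ (k + 1)]
  nlinarith [Nat.factorial_pos (k + 1)]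

theorem Nat.factorial_le_factorial_succ_sub {m k : ℕ} (hmk : m ≤ k) : k ! ≤ (k + 1)! - m := by
  have := Nat.le_mul_of_pos_right k (Nat.factorial_pos k)
  rw [Nat.factorial_succ, Nat.succ_mul]
  omega

theorem mem_closure_of_mapClusterPt {α ι : Type*} [PseudoMetricSpace α] {l : Filter ι}
    {u : ι → α} {S : Set α} {x : α} (hx : MapClusterPt x l u)
    (h : ∀ δ > 0, ∀ᶠ i in l, u i ∈ cthickening δ S) : x ∈ closure S := by
  rw [closure_eq_iInter_cthickening]
  exact mem_iInter₂.2 fun δ hδ => isClosed_cthickening.mem_of_mapClusterPt hx (h δ hδ)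

theorem isClosed_zero_union_inv_pow {a : ℝ} (ha : 1 < a) :
    IsClosed ({0} ∪ {x : ℝ | ∃ m : ℕ, 1 ≤ m ∧ x = (a ^ m)⁻¹}) := by
  have h : Tendsto (fun j : ℕ => (a ^ (j + 1))⁻¹) atTop (𝓝 0) :=
    tendsto_inv_atTop_zero.comp <|
      (tendsto_pow_atTop_atTop_of_one_lt ha).comp (tendsto_add_atTop_nat 1)
  convert h.isCompact_insert_range.isClosed using 1
  ext x
  simp only [singleton_union, mem_insert_iff, mem_ofPred_eq, mem_range]
  refine or_congr_right ⟨?_, ?_⟩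
  · rintro ⟨m, hm, rfl⟩
    exact ⟨m - 1, by rw [Nat.sub_add_cancel hm]⟩
  · rintro ⟨j, rfl⟩
    exact ⟨j + 1, j.succ_pos, rfl⟩

namespace LiouvilleNumber

theorem remainder_eq_add {m : ℝ} (hm : 1 < m) (k : ℕ) :
    remainder m k = 1 / m ^ (k + 1)! + remainder m (k + 1) := by
  simp only [remainder, (remainder_summable hm k).tsum_eq_zero_add, zero_add]
  congr 2 with i
  ring_nf

theorem remainder_mul_pow_lt {m : ℝ} (hm : 2 ≤ m) {k n j : ℕ} (h : n + j ≤ (k + 1)!) :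
    remainder m k * m ^ n < 2 / m ^ j := by
  have hm0 : 0 < m := by linarith
  calc remainder m k * m ^ n < (1 - 1 / m)⁻¹ * (1 / m ^ (k + 1)!) * m ^ n := by
        gcongr; exact remainder_lt' k (by linarith)
    _ ≤ 2 * (1 / (m ^ n * m ^ j)) * m ^ n := by
        gcongr
        · exact sub_one_div_inv_le_two hm
        · rw [← pow_add]; exact pow_le_pow_right₀ (by linarith) h
    _ = 2 / m ^ j := by field_simp

theorem fract_mul_pow_eq {b : ℕ} (hb : 2 ≤ b) {k n : ℕ} (hk : k ! ≤ n) (hn : n < (k + 1)!) :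
    Int.fract (liouvilleNumber b * (b : ℝ) ^ n) = remainder b k * (b : ℝ) ^ n := by
  have hb1 : (1 : ℝ) < b := by exact_mod_cast hb
  obtain ⟨p, hp⟩ := partialSum_eq_rat (by omega : 0 < b) k
  have hpartial : partialSum b k * (b : ℝ) ^ n = ((p * b ^ (n - k !) : ℕ) : ℝ) := by
    rw [hp, ← Nat.sub_add_cancel hk, pow_add, Nat.add_sub_cancel]
    push_cast
    field_simp
  rw [← partialSum_add_remainder hb1 k, add_mul, hpartial, Int.fract_natCast_add,
    Int.fract_eq_self]
  refine ⟨(mul_pos (remainder_pos hb1 k) (by positivity)).le, ?_⟩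
  calc remainder b k * (b : ℝ) ^ n < 2 / (b : ℝ) ^ 1 :=
        remainder_mul_pow_lt (by exact_mod_cast hb) (by omega)
    _ ≤ 1 := by rw [pow_one, div_le_one (by positivity)]; exact_mod_cast hb

theorem dist_fract_mul_pow_lt {b : ℕ} (hb : 2 ≤ b) {k n : ℕ} (hk : k ! ≤ n)
    (hn : n < (k + 1)!) :
    dist (Int.fract (liouvilleNumber b * (b : ℝ) ^ n)) ((b : ℝ) ^ ((k + 1)! - n))⁻¹ <
      2 / (b : ℝ) ^ (k + 1) := by
  have hb1 : (1 : ℝ) < b := by exact_mod_cast hb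
  have hlead : 1 / (b : ℝ) ^ (k + 1)! * (b : ℝ) ^ n = ((b : ℝ) ^ ((k + 1)! - n))⁻¹ := by
    rw [← Nat.sub_add_cancel hn.le, pow_add, Nat.add_sub_cancel]
    field_simp
  rw [fract_mul_pow_eq hb hk hn, remainder_eq_add hb1, add_mul, hlead, Real.dist_eq,
    add_sub_cancel_left, abs_of_pos (mul_pos (remainder_pos hb1 _) (by positivity))]
  exact remainder_mul_pow_lt (by exact_mod_cast hb) (Nat.add_succ_le_factorial_succ_succ hn)

end LiouvilleNumber

open LiouvilleNumber

theorem eventually_fract_liouvilleNumber_mem_cthickening {b : ℕ} (hb : 2 ≤ b) {δ : ℝ}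
    (hδ : 0 < δ) :
    ∀ᶠ n : ℕ in atTop, Int.fract (liouvilleNumber b * (b : ℝ) ^ n) ∈
      cthickening δ {x : ℝ | ∃ m : ℕ, 1 ≤ m ∧ x = ((b : ℝ) ^ m)⁻¹} := by
  have hb1 : (1 : ℝ) < b := by exact_mod_cast hb
  have h2 : Tendsto (fun j : ℕ => 2 / (b : ℝ) ^ j) atTop (𝓝 0) :=
    tendsto_const_nhds.div_atTop (tendsto_pow_atTop_atTop_of_one_lt hb1)
  obtain ⟨L, hL⟩ := eventually_atTop.1 (h2.eventually (gt_mem_nhds hδ))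
  filter_upwards [eventually_ge_atTop (max 1 L !)] with n hn
  obtain ⟨k, hk, hnk⟩ := Nat.exists_factorial_le_lt_factorial_succ (le_of_max_le_left hn)
  have hLk : L ≤ k + 1 := by
    by_contra! h
    exact (Nat.factorial_le h.le).not_gt ((le_of_max_le_right hn).trans_lt hnk)
  refine mem_cthickening_of_dist_le _ _ δ _ ⟨(k + 1)! - n, by omega, rfl⟩ ?_
  exact ((dist_fract_mul_pow_lt hb hk hnk).trans (hL _ hLk)).le

theorem mapClusterPt_inv_pow_fract_liouvilleNumber {b : ℕ} (hb : 2 ≤ b) {m : ℕ}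
    (hm : 1 ≤ m) :
    MapClusterPt ((b : ℝ) ^ m)⁻¹ atTop
      fun n : ℕ => Int.fract (liouvilleNumber b * (b : ℝ) ^ n) := by
  have hb1 : (1 : ℝ) < b := by exact_mod_cast hb
  -- for `n = (k + 1)! - m` with `k ≥ m`, the first nonzero digit of `{ξ bⁿ}` is the `m`-th
  set N : ℕ → ℕ := fun j => (j + m + 1)! - m
  have hNk : ∀ j, (j + m)! ≤ N j := fun j => Nat.factorial_le_factorial_succ_sub (by omega)
  have hN : Tendsto N atTop atTop := tendsto_atTop_mono
    (fun j => (j.le_add_right m).trans ((Nat.self_le_factorial _).trans (hNk j))) tendsto_id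
  refine MapClusterPt.of_comp hN (Tendsto.mapClusterPt ?_)
  rw [tendsto_iff_dist_tendsto_zero]
  refine squeeze_zero (fun _ => dist_nonneg) (fun j => ?_)
    (((tendsto_const_nhds (x := (2 : ℝ))).div_atTop (tendsto_pow_atTop_atTop_of_one_lt hb1)).comp
      (tendsto_add_atTop_nat (m + 1)))
  have hlt : N j < (j + m + 1)! := Nat.sub_lt (Nat.factorial_pos _) hm
  have hsub : (j + m + 1)! - N j = m :=
    Nat.sub_sub_self ((Nat.self_le_factorial _).trans' (by omega))
  have := dist_fract_mul_pow_lt hb (hNk j) hlt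
  rw [hsub] at this
  simpa [Function.comp_def, add_assoc] using this.le

/-- Let `b ≥ 2` be an integer and `ξ = ∑_{k=0}^∞ b^{-k!}`. Then the set of limit points of
the sequence of fractional parts `{ξ bⁿ}`, `n = 1, 2, 3, …`, is exactly the countable set
`{0, b⁻¹, b⁻², b⁻³, …}`. -/
theorem limit_points_of_liouville (b : ℕ) (hb : 2 ≤ b) (ξ : ℝ)
    (hξ : ξ = ∑' k : ℕ, ((b : ℝ) ^ (Nat.factorial k))⁻¹) :
    {x : ℝ | MapClusterPt x atTop (fun n : ℕ => Int.fract (ξ * (b : ℝ) ^ n))} =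
      {0} ∪ {x : ℝ | ∃ m : ℕ, 1 ≤ m ∧ x = ((b : ℝ) ^ m)⁻¹} := by
  have hb1 : (1 : ℝ) < b := by exact_mod_cast hb
  obtain rfl : ξ = liouvilleNumber b := by simp only [hξ, liouvilleNumber, one_div]
  refine Subset.antisymm (fun x hx => ?_) ?_
  · rw [← (isClosed_zero_union_inv_pow hb1).closure_eq]
    exact closure_mono subset_union_right <|
      mem_closure_of_mapClusterPt hx fun _ hδ =>
        eventually_fract_liouvilleNumber_mem_cthickening hb hδ
  · rintro x (rfl | ⟨m, hm, rfl⟩)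
    · exact isClosed_setOfPred_clusterPt.mem_of_tendsto
        (tendsto_inv_atTop_zero.comp (tendsto_pow_atTop_atTop_of_one_lt hb1))
        ((eventually_ge_atTop 1).mono fun _ hm =>
          mapClusterPt_inv_pow_fract_liouvilleNumber hb hm)
    · exact mapClusterPt_inv_pow_fract_liouvilleNumber hb hm
end
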